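/- arXiv:2311.15611 — 10 statements merged into one kernel-verified Lean document; each statement's English description precedes it below -/
import Mathlib

section
/- Let f = a_0 + a_1 z + ... + a_m z^m be a polynomial with integer coefficients, m ≥ 2, a_0 a_m ≠ 0, f primitive, and suppose |a_{m-1}| > 1 + |a_0||a_m|^{m-1} + |a_1||a_m|^{m-2} + ... + |a_{m-2}||a_m|. Then f is irreducible in ℤ[z]. -/
open Polynomial Finset

/-!
If `f = g * h` with `g`, `h` nonconstant (by primitivity), then `g(0) h(0) = a₀ ≠ 0` and
`lc g * lc h = aₘ`, so the product of the roots of `g(z / aₘ)` has modulus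
`|g(0)| |aₘ|^(deg g) / |lc g| ≥ 1`, and some root `u` of it has `|u| ≥ 1`; likewise a root `v`
for `h`. Both are roots, counted with multiplicity, of the monic polynomial
`F(z) = aₘ^(m-1) f(z / aₘ)` with coefficients `aᵢ aₘ^(m-1-i)`. Writing `F = (z - u) P`, the
Cauchy bound `|v| ≤ ∑ |pⱼ|` at the root `v` of `P` yields Perron's inequality in reverse:
`|b_(m-1)| ≤ 1 + ∑_(i<m-1) |bᵢ|`.
-/

namespace Polynomial

section NormedDivisionRing

variable {K : Type*} [NormedDivisionRing K]

theorem Monic.norm_le_sum_norm_coeff_of_isRoot {P : K[X]} (hP : P.Monic) {z : K}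
    (hz : P.IsRoot z) (hz1 : 1 ≤ ‖z‖) : ‖z‖ ≤ ∑ j ∈ range P.natDegree, ‖P.coeff j‖ := by
  obtain ⟨n, hn⟩ : ∃ n, P.natDegree = n + 1 :=
    Nat.exists_eq_succ_of_ne_zero fun h ↦ by simp [hP.natDegree_eq_zero.1 h] at hz
  have hpow : z ^ (n + 1) = -∑ j ∈ range (n + 1), P.coeff j * z ^ j := by
    have := hz.eq_zero
    rw [eval_eq_sum_range, hn, sum_range_succ, ← hn, hP.coeff_natDegree, one_mul, hn] at this
    exact eq_neg_of_add_eq_zero_right this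
  rw [hn]
  have hmul : ‖z‖ * ‖z‖ ^ n ≤ (∑ j ∈ range (n + 1), ‖P.coeff j‖) * ‖z‖ ^ n :=
    calc ‖z‖ * ‖z‖ ^ n = ‖∑ j ∈ range (n + 1), P.coeff j * z ^ j‖ := by
          rw [← norm_pow, ← norm_mul, ← pow_succ', hpow, norm_neg]
      _ ≤ ∑ j ∈ range (n + 1), ‖P.coeff j‖ * ‖z‖ ^ n := by
          refine (norm_sum_le _ _).trans (sum_le_sum fun j hj ↦ ?_)
          rw [norm_mul, norm_pow]
          gcongr
          exact Nat.lt_succ_iff.1 (mem_range.1 hj)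
      _ = _ := (sum_mul _ _ _).symm
  exact le_of_mul_le_mul_right hmul (by positivity)

/-- With `T = ∑ ‖P.coeff j‖ ≥ ‖v‖ ≥ 1`, comparing coefficients of `(X - C u) * P` gives
`‖bₙ‖ - ∑ ‖bᵢ‖ ≤ ‖u‖ - (‖u‖ - 1) T ≤ 1`. -/
theorem norm_coeff_X_sub_C_mul_le {P : K[X]} (hP : P.Monic) {u v : K} (hv : P.IsRoot v)
    (hu1 : 1 ≤ ‖u‖) (hv1 : 1 ≤ ‖v‖) :
    ‖((X - C u) * P).coeff P.natDegree‖ ≤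
      1 + ∑ i ∈ range P.natDegree, ‖((X - C u) * P).coeff i‖ := by
  set n := P.natDegree
  set T := ∑ j ∈ range n, ‖P.coeff j‖
  have hcoeff (i : ℕ) : ((X - C u) * P).coeff i = (X * P).coeff i - u * P.coeff i := by
    rw [sub_mul, coeff_sub, coeff_C_mul]
  have hT : 1 ≤ T := hv1.trans (hP.norm_le_sum_norm_coeff_of_isRoot hv hv1)
  have hshift : ∑ i ∈ range n, ‖(X * P).coeff i‖ + ‖(X * P).coeff n‖ = T := by
    rw [← sum_range_succ, sum_range_succ', coeff_X_mul_zero, norm_zero, add_zero]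
    simp only [coeff_X_mul, T]
  have hlow : ‖u‖ * T - ∑ i ∈ range n, ‖(X * P).coeff i‖ ≤
      ∑ i ∈ range n, ‖((X - C u) * P).coeff i‖ := by
    rw [mul_sum, ← sum_sub_distrib]
    refine sum_le_sum fun i _ ↦ ?_
    rw [hcoeff, norm_sub_rev, ← norm_mul]
    exact norm_sub_norm_le _ _
  have htop : ‖((X - C u) * P).coeff n‖ ≤ ‖(X * P).coeff n‖ + ‖u‖ := by
    rw [hcoeff, hP.coeff_natDegree, mul_one]
    exact norm_sub_le _ _
  nlinarith [mul_nonneg (sub_nonneg.2 hu1) (sub_nonneg.2 hT)]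

end NormedDivisionRing

theorem Monic.norm_coeff_natDegree_sub_one_le_of_dvd {K : Type*} [NormedField K] {F : K[X]}
    (hF : F.Monic) {u v : K} (hdvd : (X - C u) * (X - C v) ∣ F) (hu1 : 1 ≤ ‖u‖)
    (hv1 : 1 ≤ ‖v‖) :
    ‖F.coeff (F.natDegree - 1)‖ ≤ 1 + ∑ i ∈ range (F.natDegree - 1), ‖F.coeff i‖ := by
  obtain ⟨Q, rfl⟩ := hdvd
  rw [mul_assoc] at hF ⊢
  have hP : ((X - C v) * Q).Monic := (monic_X_sub_C u).of_mul_monic_left hF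
  have hdeg : ((X - C u) * ((X - C v) * Q)).natDegree - 1 = ((X - C v) * Q).natDegree := by
    rw [(monic_X_sub_C u).natDegree_mul hP, natDegree_X_sub_C, Nat.add_sub_cancel_left]
  rw [hdeg]
  exact norm_coeff_X_sub_C_mul_le hP (by simp) hu1 hv1

theorem exists_isRoot_one_le_norm {K : Type*} [NormedField K] [IsAlgClosed K] {p : K[X]}
    (hp : 0 < p.natDegree) (h : ‖p.leadingCoeff‖ ≤ ‖p.coeff 0‖) :
    ∃ z, p.IsRoot z ∧ 1 ≤ ‖z‖ := by
  by_contra! hsmall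
  have hsplit := IsAlgClosed.splits p
  have hp0 : p ≠ 0 := ne_zero_of_natDegree_gt hp
  obtain ⟨z, hz⟩ : ∃ z, z ∈ p.roots := Multiset.exists_mem_of_ne_zero <| by
    rw [← Multiset.card_pos, ← hsplit.natDegree_eq_card_roots]
    exact hp
  obtain ⟨s, hs⟩ := Multiset.exists_cons_of_mem hz
  have hprod : ‖p.roots.prod‖ < 1 := by
    have hs1 : ‖s.prod‖ ≤ 1 := by
      rw [← normHom_apply, map_multiset_prod]
      simpa using Multiset.prod_map_le_pow_card (f := normHom) (r := (1 : ℝ)) (t := s)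
        (fun x _ ↦ by rw [normHom_apply]; exact norm_nonneg x)
        (fun x hx ↦ by
          rw [normHom_apply]
          exact (hsmall x (isRoot_of_mem_roots (hs ▸ Multiset.mem_cons_of_mem hx))).le)
    rw [hs, Multiset.prod_cons, norm_mul]
    nlinarith [hsmall z (isRoot_of_mem_roots hz), norm_nonneg z]
  rw [hsplit.coeff_zero_eq_leadingCoeff_mul_prod_roots, norm_mul, norm_mul, norm_pow, norm_neg,
    norm_one, one_pow, one_mul] at h
  nlinarith [norm_pos_iff.2 (leadingCoeff_ne_zero.2 hp0)]

theorem coeff_sum_range_C_mul_X_pow {R : Type*} [Semiring R] (c : ℕ → R) {n i : ℕ}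
    (hi : i ≤ n) : (∑ j ∈ range (n + 1), C (c j) * X ^ j).coeff i = c i := by
  simp [Nat.lt_succ_iff.2 hi]

theorem natDegree_sum_range_C_mul_X_pow {R : Type*} [Semiring R] (c : ℕ → R) {n : ℕ}
    (hc : c n ≠ 0) : (∑ j ∈ range (n + 1), C (c j) * X ^ j).natDegree = n :=
  natDegree_eq_of_le_of_coeff_ne_zero
    (natDegree_sum_le_of_forall_le _ _ fun j hj ↦
      (natDegree_C_mul_X_pow_le _ _).trans (mem_range_succ_iff.1 hj))
    (by rwa [coeff_sum_range_C_mul_X_pow c le_rfl])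

theorem IsPrimitive.natDegree_pos_of_dvd {R : Type*} [CommSemiring R] {p q : R[X]}
    (hp : p.IsPrimitive) (hq : q ∣ p) (hu : ¬IsUnit q) : 0 < q.natDegree := by
  by_contra! h
  have hC := eq_C_of_natDegree_eq_zero (Nat.le_zero.1 h)
  exact hu (hC ▸ isUnit_C.2 (hp _ (hC ▸ hq)))

theorem exists_isRoot_map_scaleRoots_one_le_norm {g : ℤ[X]} {A : ℤ} (hg : 0 < g.natDegree)
    (hg0 : g.coeff 0 ≠ 0) (hA : g.leadingCoeff ∣ A) (hA0 : A ≠ 0) :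
    ∃ z : ℂ, ((g.scaleRoots A).map (Int.castRingHom ℂ)).IsRoot z ∧ 1 ≤ ‖z‖ := by
  have hinj : Function.Injective (Int.castRingHom ℂ) := RingHom.injective_int _
  apply exists_isRoot_one_le_norm
  · rwa [natDegree_map_eq_of_injective hinj, natDegree_scaleRoots]
  · rw [leadingCoeff_map_of_injective hinj, leadingCoeff_scaleRoots, coeff_map, coeff_scaleRoots]
    simp only [eq_intCast, Complex.norm_intCast, Nat.sub_zero]
    have hlead : |g.leadingCoeff| ≤ |A| := Int.le_of_dvd (abs_pos.2 hA0) ((abs_dvd_abs _ _).2 hA)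
    have hpow : |A| ≤ |A| ^ g.natDegree := le_self_pow₀ (Int.one_le_abs hA0) hg.ne'
    have hconst : |A| ^ g.natDegree ≤ |g.coeff 0 * A ^ g.natDegree| := by
      rw [abs_mul, abs_pow]
      exact le_mul_of_one_le_left (by positivity) (Int.one_le_abs hg0)
    exact_mod_cast hlead.trans (hpow.trans hconst)

/-- `f.integralNormalization` is the monic polynomial `lc(f)^(n-1) f(z / lc(f))`. -/
theorem IsPrimitive.irreducible_of_perron_integralNormalization {f : ℤ[X]}
    (hprim : f.IsPrimitive) (hdeg : 0 < f.natDegree) (h0 : f.coeff 0 ≠ 0)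
    (hperron : 1 + ∑ i ∈ range (f.natDegree - 1), |f.integralNormalization.coeff i| <
      |f.integralNormalization.coeff (f.natDegree - 1)|) :
    Irreducible f := by
  refine irreducible_iff.2 ⟨not_isUnit_of_natDegree_pos f hdeg, fun g h hfgh ↦ ?_⟩
  by_contra! hunits
  subst hfgh
  set A := (g * h).leadingCoeff
  have hA0 : A ≠ 0 := leadingCoeff_ne_zero.2 hprim.ne_zero
  have hA : A = g.leadingCoeff * h.leadingCoeff := leadingCoeff_mul g h
  have hgh0 : g.coeff 0 * h.coeff 0 ≠ 0 := by rwa [mul_coeff_zero] at h0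
  obtain ⟨u, hu, hu1⟩ := exists_isRoot_map_scaleRoots_one_le_norm
    (hprim.natDegree_pos_of_dvd (dvd_mul_right g h) hunits.1) (left_ne_zero_of_mul hgh0)
    (Dvd.intro _ hA.symm) hA0
  obtain ⟨v, hv, hv1⟩ := exists_isRoot_map_scaleRoots_one_le_norm
    (hprim.natDegree_pos_of_dvd (dvd_mul_left h g) hunits.2) (right_ne_zero_of_mul hgh0)
    (Dvd.intro_left _ hA.symm) hA0
  set φ := Int.castRingHom ℂ
  -- `scaleRoots` is multiplicative, unlike `integralNormalization`: this also covers `u = v`.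
  have hfactor : C A * (g * h).integralNormalization = g.scaleRoots A * h.scaleRoots A := by
    rw [← smul_eq_C_mul, leadingCoeff_smul_integralNormalization,
      mul_scaleRoots_of_noZeroDivisors]
  have hdvd : (X - C u) * (X - C v) ∣ (g * h).integralNormalization.map φ := by
    have hunit : IsUnit (C (φ A)) := isUnit_C.2 (Ne.isUnit (by simpa [φ] using hA0))
    rw [← hunit.dvd_mul_left, ← map_C, ← Polynomial.map_mul, hfactor, Polynomial.map_mul]
    exact mul_dvd_mul (dvd_iff_isRoot.2 hu) (dvd_iff_isRoot.2 hv)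
  have hmonic := (monic_integralNormalization hprim.ne_zero).map φ
  have := hmonic.norm_coeff_natDegree_sub_one_le_of_dvd hdvd hu1 hv1
  rw [natDegree_map_eq_of_injective (RingHom.injective_int φ), natDegree_integralNormalization]
    at this
  simp only [coeff_map, eq_intCast, φ, Complex.norm_intCast] at this
  exact (not_lt.2 (by exact_mod_cast this)) hperron

end Polynomial

/-- Non-monic extension of Perron's irreducibility criterion (Theorem B). -/
theorem stmt0 (m : ℕ) (hm : 2 ≤ m) (a : ℕ → ℤ) (f : ℤ[X])
    (hf : f = ∑ i ∈ range (m + 1), C (a i) * X ^ i)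
    (ha : a 0 * a m ≠ 0) (hprim : f.IsPrimitive)
    (hineq : |a (m - 1)| > 1 + ∑ i ∈ range (m - 1), |a i| * |a m| ^ (m - 1 - i)) :
    Irreducible f := by
  have hcoeff (i : ℕ) (hi : i ≤ m) : f.coeff i = a i := hf ▸ coeff_sum_range_C_mul_X_pow a hi
  have hdeg : f.natDegree = m := hf ▸ natDegree_sum_range_C_mul_X_pow a (right_ne_zero_of_mul ha)
  have hnorm (i : ℕ) (hi : i < m) :
      |f.integralNormalization.coeff i| = |a i| * |a m| ^ (m - 1 - i) := by
    have hdeg_ne : f.degree ≠ i := by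
      rw [degree_eq_natDegree hprim.ne_zero, hdeg]
      exact_mod_cast hi.ne'
    rw [integralNormalization_coeff, if_neg hdeg_ne, leadingCoeff, hdeg, hcoeff i hi.le,
      hcoeff m le_rfl, abs_mul, abs_pow]
  refine hprim.irreducible_of_perron_integralNormalization (by omega)
    (by rw [hcoeff 0 m.zero_le]; exact left_ne_zero_of_mul ha) ?_
  rw [hdeg, hnorm (m - 1) (by omega), Nat.sub_self, pow_zero, mul_one,
    sum_congr rfl fun i hi ↦ hnorm i (by rw [mem_range] at hi; omega)]
  exact hineq
end

section
/- Let f = a_0 + a_1 z + ... + a_m z^m ∈ ℤ[z], and suppose there exist a prime p and coprime positive integers k and j with 1 ≤ j ≤ m such that p does not divide a_j, p^k divides a_i for all i = 0, ..., j−1, and p^{k+1} does not divide a_0. Then any factorization f = g·h in ℤ[z] has a factor of degree at most k_0, where k_0 ∈ {0, m−j}. -/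
open Polynomial Finset

/-!
Weight the coefficients of `q` by `w(i) = j * v_p(q_i) + k * i`. The indices where `w` is minimal
span the edge of slope `-k / j` of the Newton polygon of `q`; for `f` the hypotheses say that this
edge runs from `0` to `j`. By Dumas' theorem the endpoints of such an edge of a product are the sums
of the endpoints for the factors, so the edges of `g` and `h` have lengths adding up to `j`. Since
`k` and `j` are coprime, an edge of slope `-k / j` between lattice points has length divisible by
`j`, so one factor has degree at least `j`, and the other at most `m - j`.
-/

section Multiplicity

variable {α ι : Type*} {p : α}

theorem le_emultiplicity_sum [Semiring α] {s : Finset ι} {F : ι → α} {t : ℕ∞}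
    (h : ∀ x ∈ s, t ≤ emultiplicity p (F x)) : t ≤ emultiplicity p (∑ x ∈ s, F x) := by
  classical
  induction s using Finset.induction with
  | empty => simp
  | insert y s hy ih =>
    rw [sum_insert hy]
    exact (le_min (h y (mem_insert_self y s)) (ih fun x hx => h x (mem_insert_of_mem hx))).trans
      min_le_emultiplicity_add

theorem emultiplicity_sum_eq_of_lt [Ring α] {s : Finset ι} {F : ι → α} {i : ι} (hi : i ∈ s)
    (hfin : emultiplicity p (F i) ≠ ⊤)
    (hlt : ∀ x ∈ s, x ≠ i → emultiplicity p (F i) < emultiplicity p (F x)) :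
    emultiplicity p (∑ x ∈ s, F x) = emultiplicity p (F i) := by
  classical
  have hrest : emultiplicity p (F i) + 1 ≤ emultiplicity p (∑ x ∈ s.erase i, F x) :=
    le_emultiplicity_sum fun x hx =>
      Order.add_one_le_of_lt (hlt x (mem_of_mem_erase hx) (ne_of_mem_erase hx))
  rw [← add_sum_erase s F hi, add_comm,
    emultiplicity_add_of_gt (((ENat.lt_add_one_iff hfin).mpr le_rfl).trans_le hrest)]

end Multiplicity

/-- For `w = weightedVal p a b q` this says that the edge of slope `-b / a` of the Newton polygon
of `q` runs from `lo` to `hi`. -/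
structure IsMinSegment (w : ℕ → ℕ∞) (W lo hi : ℕ) : Prop where
  le : ∀ i, W ≤ w i
  eq_lo : w lo = W
  eq_hi : w hi = W
  lt_of_lt_lo : ∀ i < lo, W < w i
  lt_of_hi_lt : ∀ i, hi < i → W < w i

namespace IsMinSegment

variable {w : ℕ → ℕ∞} {W W' lo lo' hi hi' : ℕ}

theorem unique (h : IsMinSegment w W lo hi) (h' : IsMinSegment w W' lo' hi') :
    W = W' ∧ lo = lo' ∧ hi = hi' := by
  have hW : W = W' := by
    exact_mod_cast le_antisymm (h'.eq_lo ▸ h.le lo') (h.eq_lo ▸ h'.le lo)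
  subst hW
  refine ⟨rfl, ?_, ?_⟩
  · by_contra hne
    rcases Nat.lt_or_gt_of_ne hne with hlt | hlt
    · exact (h'.lt_of_lt_lo lo hlt).ne h.eq_lo.symm
    · exact (h.lt_of_lt_lo lo' hlt).ne h'.eq_lo.symm
  · by_contra hne
    rcases Nat.lt_or_gt_of_ne hne with hlt | hlt
    · exact (h.lt_of_hi_lt hi' hlt).ne h'.eq_hi.symm
    · exact (h'.lt_of_hi_lt hi hlt).ne h.eq_hi.symm

end IsMinSegment

theorem exists_isMinSegment {w : ℕ → ℕ∞} {N : ℕ} (hN : w N ≠ ⊤)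
    (htop : ∀ i, N < i → w i = ⊤) : ∃ W lo hi, hi ≤ N ∧ IsMinSegment w W lo hi := by
  classical
  obtain ⟨i₀, hi₀⟩ := ciInf_mem w
  obtain ⟨W, hW⟩ := ENat.ne_top_iff_exists.mp (ne_top_of_le_ne_top hN (ciInf_le' w N))
  rw [← hW] at hi₀
  have hle : ∀ i, (W : ℕ∞) ≤ w i := fun i => hW ▸ ciInf_le' w i
  have hi₀N : i₀ ≤ N := by
    by_contra! hlt
    exact ENat.natCast_ne_top W (hi₀ ▸ htop i₀ hlt)
  have hex : ∃ i, w i = W := ⟨i₀, hi₀⟩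
  refine ⟨W, Nat.find hex, Nat.findGreatest (fun i => w i = W) N, Nat.findGreatest_le N,
    ⟨hle, Nat.find_spec hex, Nat.findGreatest_spec (P := fun i => w i = W) hi₀N hi₀,
      fun i hi => (hle i).lt_of_ne fun h => Nat.find_min hex hi h.symm, fun i hi => ?_⟩⟩
  rcases le_or_gt i N with hiN | hiN
  · exact (hle i).lt_of_ne fun h => Nat.findGreatest_is_greatest hi hiN h.symm
  · rw [htop i hiN]
    exact ENat.natCast_lt_top W

section WeightedVal

variable {R : Type*} [Semiring R] {p : R} {a b : ℕ}

noncomputable def weightedVal (p : R) (a b : ℕ) (q : R[X]) (i : ℕ) : ℕ∞ :=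
  a * emultiplicity p (q.coeff i) + (b * i : ℕ)

theorem exists_of_weightedVal_eq {q : R[X]} {i W : ℕ} (ha : a ≠ 0)
    (h : weightedVal p a b q i = W) : ∃ α : ℕ, a * α + b * i = W := by
  unfold weightedVal at h
  cases hv : emultiplicity p (q.coeff i) with
  | top => simp [hv, ENat.mul_top (Nat.cast_ne_zero.mpr ha)] at h
  | coe α => exact ⟨α, by rw [hv] at h; exact_mod_cast h⟩

theorem weightedVal_eq_top {q : R[X]} {i : ℕ} (ha : a ≠ 0) (hi : q.natDegree < i) :
    weightedVal p a b q i = ⊤ := by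
  simp [weightedVal, coeff_eq_zero_of_natDegree_lt hi, ENat.mul_top (Nat.cast_ne_zero.mpr ha)]

theorem IsMinSegment.dvd_mul_hi {q : R[X]} {W hi : ℕ} (ha : a ≠ 0)
    (hq : IsMinSegment (weightedVal p a b q) W 0 hi) : a ∣ b * hi := by
  obtain ⟨α₀, h₀⟩ := exists_of_weightedVal_eq ha hq.eq_lo
  obtain ⟨α₁, h₁⟩ := exists_of_weightedVal_eq ha hq.eq_hi
  rw [mul_zero, add_zero, ← h₁] at h₀
  exact (Nat.dvd_add_right (dvd_mul_right a α₁)).mp (h₀ ▸ dvd_mul_right a α₀)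

theorem isMinSegment_weightedVal_of_dvd {q : R[X]} {j k : ℕ} (hk : 0 < k) (hj : 0 < j)
    (hndvd : ¬p ∣ q.coeff j) (hdvd : ∀ i < j, p ^ k ∣ q.coeff i)
    (hndvd0 : ¬p ^ (k + 1) ∣ q.coeff 0) :
    IsMinSegment (weightedVal p j k q) (j * k) 0 j := by
  have hv₀ : emultiplicity p (q.coeff 0) = k :=
    emultiplicity_eq_of_dvd_of_not_dvd (hdvd 0 hj) hndvd0
  have hvj : emultiplicity p (q.coeff j) = 0 := emultiplicity_eq_zero.mpr hndvd
  have hlt : ∀ i, j < i → ((j * k : ℕ) : ℕ∞) < weightedVal p j k q i := fun i hi =>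
    calc ((j * k : ℕ) : ℕ∞) < (k * i : ℕ) := by
          exact_mod_cast (mul_comm j k).trans_lt (Nat.mul_lt_mul_of_pos_left hi hk)
      _ ≤ weightedVal p j k q i := le_add_self
  have heq_hi : weightedVal p j k q j = (j * k : ℕ) := by
    rw [weightedVal, hvj, mul_zero, zero_add, mul_comm]
  refine ⟨fun i => ?_, ?_, heq_hi, fun i hi => absurd hi (Nat.not_lt_zero i), hlt⟩
  · rcases lt_trichotomy i j with hij | rfl | hij
    · calc ((j * k : ℕ) : ℕ∞) = j * (k : ℕ∞) := by push_cast; rfl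
        _ ≤ j * emultiplicity p (q.coeff i) := by
          gcongr
          exact pow_dvd_iff_le_emultiplicity.mp (hdvd i hij)
        _ ≤ weightedVal p j k q i := le_self_add
    · exact heq_hi.ge
    · exact (hlt i hij).le
  · rw [weightedVal, hv₀]
    push_cast
    ring

end WeightedVal

section Product

variable {R : Type*} [CommRing R] [IsDomain R] {p : R} {a b : ℕ} {g h : R[X]} {n : ℕ}

theorem weightedVal_add_weightedVal (hp : Prime p) {x : ℕ × ℕ} (hx : x ∈ antidiagonal n) :
    weightedVal p a b g x.1 + weightedVal p a b h x.2 =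
      a * emultiplicity p (g.coeff x.1 * h.coeff x.2) + (b * n : ℕ) := by
  rw [weightedVal, weightedVal, emultiplicity_mul hp, ← mem_antidiagonal.mp hx]
  push_cast
  ring

theorem le_weightedVal_mul (hp : Prime p) {B : ℕ∞}
    (hB : ∀ x ∈ antidiagonal n, B ≤ weightedVal p a b g x.1 + weightedVal p a b h x.2) :
    B ≤ weightedVal p a b (g * h) n := by
  obtain ⟨x₀, hx₀, hmin⟩ := exists_min_image (antidiagonal n)
    (fun x => emultiplicity p (g.coeff x.1 * h.coeff x.2)) ⟨(0, n), by simp⟩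
  calc B ≤ weightedVal p a b g x₀.1 + weightedVal p a b h x₀.2 := hB x₀ hx₀
    _ = a * emultiplicity p (g.coeff x₀.1 * h.coeff x₀.2) + (b * n : ℕ) :=
      weightedVal_add_weightedVal hp hx₀
    _ ≤ weightedVal p a b (g * h) n := by
      rw [weightedVal, coeff_mul]
      gcongr
      exact le_emultiplicity_sum hmin

theorem lt_weightedVal_mul (hp : Prime p) {W : ℕ}
    (hW : ∀ x ∈ antidiagonal n,
      (W : ℕ∞) < weightedVal p a b g x.1 + weightedVal p a b h x.2) :
    (W : ℕ∞) < weightedVal p a b (g * h) n :=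
  (ENat.add_one_le_iff (ENat.natCast_ne_top W)).mp
    (le_weightedVal_mul hp fun x hx => Order.add_one_le_of_lt (hW x hx))

theorem weightedVal_mul_eq (hp : Prime p) (ha : a ≠ 0) {x₀ : ℕ × ℕ} {W₁ W₂ : ℕ}
    (hx₀ : x₀ ∈ antidiagonal n) (hg : weightedVal p a b g x₀.1 = W₁)
    (hh : weightedVal p a b h x₀.2 = W₂)
    (hlt : ∀ x ∈ antidiagonal n, x ≠ x₀ →
      ((W₁ + W₂ : ℕ) : ℕ∞) < weightedVal p a b g x.1 + weightedVal p a b h x.2) :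
    weightedVal p a b (g * h) n = (W₁ + W₂ : ℕ) := by
  have hsum : ((W₁ + W₂ : ℕ) : ℕ∞) =
      a * emultiplicity p (g.coeff x₀.1 * h.coeff x₀.2) + (b * n : ℕ) := by
    rw [← weightedVal_add_weightedVal hp hx₀, hg, hh, Nat.cast_add]
  have hfin : emultiplicity p (g.coeff x₀.1 * h.coeff x₀.2) ≠ ⊤ := by
    intro htop
    rw [htop, ENat.mul_top (Nat.cast_ne_zero.mpr ha), top_add] at hsum
    exact ENat.natCast_ne_top _ hsum
  rw [hsum, weightedVal, coeff_mul, emultiplicity_sum_eq_of_lt hx₀ hfin]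
  intro x hx hne
  have := hlt x hx hne
  rw [hsum, weightedVal_add_weightedVal hp hx] at this
  by_contra! hle
  exact this.not_ge (by gcongr)

end Product

namespace IsMinSegment

variable {u v : ℕ → ℕ∞} {W₁ W₂ s₀ s₁ t₀ t₁ : ℕ}

theorem add_lt_of_le_lo (hu : IsMinSegment u W₁ s₀ s₁) (hv : IsMinSegment v W₂ t₀ t₁)
    {x : ℕ × ℕ} (hx : x.1 + x.2 ≤ s₀ + t₀) (hne : x ≠ (s₀, t₀)) :
    ((W₁ + W₂ : ℕ) : ℕ∞) < u x.1 + v x.2 := by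
  rw [Nat.cast_add]
  rcases lt_or_ge x.1 s₀ with h₁ | h₁
  · exact ENat.add_lt_add_of_lt_of_le (ENat.natCast_ne_top _) (hu.lt_of_lt_lo _ h₁) (hv.le _)
  · have h₂ : x.2 < t₀ := by
      by_contra! h₂
      exact hne (Prod.ext (by omega) (by omega))
    exact ENat.add_lt_add_of_le_of_lt (ENat.natCast_ne_top _) (hu.le _) (hv.lt_of_lt_lo _ h₂)

theorem add_lt_of_hi_le (hu : IsMinSegment u W₁ s₀ s₁) (hv : IsMinSegment v W₂ t₀ t₁)
    {x : ℕ × ℕ} (hx : s₁ + t₁ ≤ x.1 + x.2) (hne : x ≠ (s₁, t₁)) :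
    ((W₁ + W₂ : ℕ) : ℕ∞) < u x.1 + v x.2 := by
  rw [Nat.cast_add]
  rcases lt_or_ge s₁ x.1 with h₁ | h₁
  · exact ENat.add_lt_add_of_lt_of_le (ENat.natCast_ne_top _) (hu.lt_of_hi_lt _ h₁) (hv.le _)
  · have h₂ : t₁ < x.2 := by
      by_contra! h₂
      exact hne (Prod.ext (by omega) (by omega))
    exact ENat.add_lt_add_of_le_of_lt (ENat.natCast_ne_top _) (hu.le _) (hv.lt_of_hi_lt _ h₂)

variable {R : Type*} [CommRing R] [IsDomain R] {p : R} {a b : ℕ} {g h : R[X]}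

/-- Dumas' theorem, for the edges of slope `-b / a`. -/
theorem weightedVal_mul (hp : Prime p) (ha : a ≠ 0)
    (hg : IsMinSegment (weightedVal p a b g) W₁ s₀ s₁)
    (hh : IsMinSegment (weightedVal p a b h) W₂ t₀ t₁) :
    IsMinSegment (weightedVal p a b (g * h)) (W₁ + W₂) (s₀ + t₀) (s₁ + t₁) where
  le n := le_weightedVal_mul hp fun x _ => by
    rw [Nat.cast_add]
    exact add_le_add (hg.le _) (hh.le _)
  eq_lo := weightedVal_mul_eq hp ha (x₀ := (s₀, t₀)) (by simp) hg.eq_lo hh.eq_lo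
    fun x hx hne => hg.add_lt_of_le_lo hh (mem_antidiagonal.mp hx).le hne
  eq_hi := weightedVal_mul_eq hp ha (x₀ := (s₁, t₁)) (by simp) hg.eq_hi hh.eq_hi
    fun x hx hne => hg.add_lt_of_hi_le hh (mem_antidiagonal.mp hx).ge hne
  lt_of_lt_lo n hn := lt_weightedVal_mul hp fun x hx => by
    have hx := mem_antidiagonal.mp hx
    exact hg.add_lt_of_le_lo hh (by omega) fun h => by simp [h] at hx; omega
  lt_of_hi_lt n hn := lt_weightedVal_mul hp fun x hx => by
    have hx := mem_antidiagonal.mp hx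
    exact hg.add_lt_of_hi_le hh (by omega) fun h => by simp [h] at hx; omega

end IsMinSegment

section Eisenstein

variable {R : Type*} [CommRing R] {p : R} {a b : ℕ}

theorem weightedVal_natDegree_ne_top [IsDomain R] [WfDvdMonoid R] (hp : Prime p) {q : R[X]}
    (hq : q ≠ 0) : weightedVal p a b q q.natDegree ≠ ⊤ := by
  have hfin := FiniteMultiplicity.of_prime_left hp (leadingCoeff_ne_zero.mpr hq)
  rw [weightedVal, coeff_natDegree, hfin.emultiplicity_eq_multiplicity]
  exact_mod_cast ENat.natCast_ne_top _

theorem exists_isMinSegment_weightedVal [IsDomain R] [WfDvdMonoid R] (hp : Prime p)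
    (ha : a ≠ 0) {q : R[X]} (hq : q ≠ 0) :
    ∃ W lo hi, hi ≤ q.natDegree ∧ IsMinSegment (weightedVal p a b q) W lo hi :=
  exists_isMinSegment (weightedVal_natDegree_ne_top hp hq) fun _ hi => weightedVal_eq_top ha hi

theorem le_natDegree_or_le_natDegree_of_eisenstein [IsDomain R] [WfDvdMonoid R]
    (hp : Prime p) {g h : R[X]} {j k : ℕ} (hk : 0 < k) (hj : 0 < j) (hcop : k.Coprime j)
    (hndvd : ¬p ∣ (g * h).coeff j) (hdvd : ∀ i < j, p ^ k ∣ (g * h).coeff i)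
    (hndvd0 : ¬p ^ (k + 1) ∣ (g * h).coeff 0) :
    j ≤ g.natDegree ∨ j ≤ h.natDegree := by
  by_contra! hdeg
  have hgh : g * h ≠ 0 := fun h0 => hndvd (by simp [h0])
  obtain ⟨W₁, s₀, s₁, hs₁, hg⟩ :=
    exists_isMinSegment_weightedVal (b := k) hp hj.ne' (left_ne_zero_of_mul hgh)
  obtain ⟨W₂, t₀, t₁, ht₁, hh⟩ :=
    exists_isMinSegment_weightedVal (b := k) hp hj.ne' (right_ne_zero_of_mul hgh)
  obtain ⟨-, hlo, hhi⟩ := (hg.weightedVal_mul hp hj.ne' hh).unique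
    (isMinSegment_weightedVal_of_dvd hk hj hndvd hdvd hndvd0)
  obtain ⟨rfl, rfl⟩ : s₀ = 0 ∧ t₀ = 0 := by omega
  have hs : s₁ = 0 := Nat.eq_zero_of_dvd_of_lt
    (hcop.symm.dvd_of_dvd_mul_left (hg.dvd_mul_hi hj.ne')) (by omega)
  have ht : t₁ = 0 := Nat.eq_zero_of_dvd_of_lt
    (hcop.symm.dvd_of_dvd_mul_left (hh.dvd_mul_hi hj.ne')) (by omega)
  omega

end Eisenstein

/-- Theorem 1: a generalization of Eisenstein's criterion. Any factorization
`f = g * h` in `ℤ[z]` has a constant factor or a factor of degree at most `m - j`. -/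
theorem stmt1 (m : ℕ) (a : ℕ → ℤ) (f : ℤ[X])
    (hf : f = ∑ i ∈ range (m + 1), C (a i) * X ^ i)
    (p : ℕ) (hp : p.Prime) (k j : ℕ) (hk : 1 ≤ k) (hj1 : 1 ≤ j) (hjm : j ≤ m)
    (hcop : Nat.Coprime k j)
    (hndvd : ¬ (p : ℤ) ∣ a j)
    (hdvd : ∀ i < j, (p : ℤ) ^ k ∣ a i)
    (hndvd0 : ¬ (p : ℤ) ^ (k + 1) ∣ a 0)
    (g h : ℤ[X]) (hfac : f = g * h) :
    (g.natDegree = 0 ∨ h.natDegree = 0) ∨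
      (g.natDegree ≤ m - j ∨ h.natDegree ≤ m - j) := by
  have hcoeff : ∀ i ≤ m, (g * h).coeff i = a i := fun i hi => by
    simp [← hfac, hf, Nat.lt_succ_iff.mpr hi]
  have hdeg : (g * h).natDegree ≤ m := hfac ▸ hf ▸ natDegree_sum_le_of_forall_le _ _
    fun i hi => (natDegree_C_mul_X_pow_le _ _).trans (mem_range_succ_iff.mp hi)
  have hgh : g * h ≠ 0 := fun h0 => hndvd (by simp [← hcoeff j hjm, h0])
  rw [natDegree_mul (left_ne_zero_of_mul hgh) (right_ne_zero_of_mul hgh)] at hdeg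
  have hfactor := le_natDegree_or_le_natDegree_of_eisenstein (Nat.prime_iff_prime_int.mp hp) hk hj1 hcop
    (hcoeff j hjm ▸ hndvd) (fun i hi => hcoeff i (by omega) ▸ hdvd i hi)
    (hcoeff 0 (by omega) ▸ hndvd0)
  omega
end

section
/- Let f = a_0 + a_1 z + ... + a_m z^m ∈ ℤ[z] be primitive, and suppose there exist a prime p and coprime positive integers k and m such that p does not divide a_m, p^k divides a_i for all i = 0, ..., m−1, and p^{k+1} does not divide a_0. Then f is irreducible in ℤ[z]. -/
/-!
Weight the `u`-th coefficient `c` of an integer polynomial by `m * v_p(c) + k * u`, the height of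
the point `(u, v_p(c))` above a line of slope `-k/m`. For a product `g * h`, the first and the last
index of minimal weight are the sums of the corresponding indices for `g` and for `h`, since the
term realising them cannot be cancelled by the other terms of the convolution. The hypotheses make
`0` the first and `m = deg f` the last index of minimal weight of `f`. So if `f = g * h`, then
`g` and `h` have first index `0` and last indices `i`, `j` with `i + j = m`; the weights at `0` and
`i` agree, so `m ∣ k * i`, hence `m ∣ i` and likewise `m ∣ j`. Since `i ≤ deg g` and `j ≤ deg h`,
one factor has degree `0`, i.e. is a constant, which is a unit because `f` is primitive.
-/

open Polynomial Finset

namespace Polynomial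

noncomputable def coeffWeight (p m k : ℕ) (g : ℤ[X]) (u : ℕ) : ℤ :=
  m * padicValInt p (g.coeff u) + k * u

def IsFirstMinWeight (p m k : ℕ) (g : ℤ[X]) (i : ℕ) : Prop :=
  g.coeff i ≠ 0 ∧ ∀ u, g.coeff u ≠ 0 →
    coeffWeight p m k g i ≤ coeffWeight p m k g u ∧
      (u < i → coeffWeight p m k g i < coeffWeight p m k g u)

def IsLastMinWeight (p m k : ℕ) (g : ℤ[X]) (i : ℕ) : Prop :=
  g.coeff i ≠ 0 ∧ ∀ u, g.coeff u ≠ 0 →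
    coeffWeight p m k g i ≤ coeffWeight p m k g u ∧
      (i < u → coeffWeight p m k g i < coeffWeight p m k g u)

variable {p m k : ℕ} {g h : ℤ[X]} {i j : ℕ}

theorem exists_isFirstMinWeight (hg : g ≠ 0) : ∃ i, IsFirstMinWeight p m k g i := by
  obtain ⟨i, hi, hmin⟩ := g.support.exists_min_image
    (fun u => toLex (coeffWeight p m k g u, u)) (support_nonempty.mpr hg)
  refine ⟨i, mem_support_iff.mp hi, fun u hu => ?_⟩
  have := Prod.Lex.toLex_le_toLex'.mp (hmin u (mem_support_iff.mpr hu))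
  exact ⟨this.1, fun hui => this.1.lt_of_ne fun heq => (this.2 heq).not_gt hui⟩

theorem exists_isLastMinWeight (hg : g ≠ 0) : ∃ i, IsLastMinWeight p m k g i := by
  obtain ⟨i, hi, hmin⟩ := g.support.exists_min_image
    (fun u => toLex (coeffWeight p m k g u, OrderDual.toDual u)) (support_nonempty.mpr hg)
  refine ⟨i, mem_support_iff.mp hi, fun u hu => ?_⟩
  have := Prod.Lex.toLex_le_toLex'.mp (hmin u (mem_support_iff.mpr hu))
  exact ⟨this.1, fun hiu => this.1.lt_of_ne fun heq =>
    (OrderDual.toDual_le_toDual.mp (this.2 heq)).not_gt hiu⟩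

theorem IsFirstMinWeight.unique (hi : IsFirstMinWeight p m k g i)
    (hj : IsFirstMinWeight p m k g j) : i = j := by
  by_contra hne
  rcases lt_or_gt_of_ne hne with hij | hji
  · exact (hj.2 i hi.1).2 hij |>.not_ge (hi.2 j hj.1).1
  · exact (hi.2 j hj.1).2 hji |>.not_ge (hj.2 i hi.1).1

theorem IsLastMinWeight.unique (hi : IsLastMinWeight p m k g i)
    (hj : IsLastMinWeight p m k g j) : i = j := by
  by_contra hne
  rcases lt_or_gt_of_ne hne with hij | hji
  · exact (hi.2 j hj.1).2 hij |>.not_ge (hj.2 i hi.1).1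
  · exact (hj.2 i hi.1).2 hji |>.not_ge (hi.2 j hj.1).1

theorem IsFirstMinWeight.dvd_sub (hi : IsFirstMinWeight p m k g i)
    (hj : IsLastMinWeight p m k g j) (hcop : k.Coprime m) : (m : ℤ) ∣ (j : ℤ) - i := by
  have heq : coeffWeight p m k g i = coeffWeight p m k g j :=
    le_antisymm (hi.2 j hj.1).1 (hj.2 i hi.1).1
  have hdvd : (m : ℤ) ∣ k * ((j : ℤ) - i) :=
    ⟨padicValInt p (g.coeff i) - padicValInt p (g.coeff j), by
      simp only [coeffWeight] at heq; linarith⟩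
  exact (Nat.isCoprime_iff_coprime.mpr hcop.symm).dvd_of_dvd_mul_left hdvd

theorem IsFirstMinWeight.add_lt {u w : ℕ} (hi : IsFirstMinWeight p m k g i)
    (hj : IsFirstMinWeight p m k h j) (hu : g.coeff u ≠ 0) (hw : h.coeff w ≠ 0)
    (huw : u < i ∨ w < j) :
    coeffWeight p m k g i + coeffWeight p m k h j <
      coeffWeight p m k g u + coeffWeight p m k h w := by
  rcases huw with hui | hwj
  · exact add_lt_add_of_lt_of_le ((hi.2 u hu).2 hui) (hj.2 w hw).1
  · exact add_lt_add_of_le_of_lt (hi.2 u hu).1 ((hj.2 w hw).2 hwj)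

theorem IsLastMinWeight.add_lt {u w : ℕ} (hi : IsLastMinWeight p m k g i)
    (hj : IsLastMinWeight p m k h j) (hu : g.coeff u ≠ 0) (hw : h.coeff w ≠ 0)
    (huw : i < u ∨ j < w) :
    coeffWeight p m k g i + coeffWeight p m k h j <
      coeffWeight p m k g u + coeffWeight p m k h w := by
  rcases huw with hiu | hjw
  · exact add_lt_add_of_lt_of_le ((hi.2 u hu).2 hiu) (hj.2 w hw).1
  · exact add_lt_add_of_le_of_lt (hi.2 u hu).1 ((hj.2 w hw).2 hjw)

section Prime

variable [Fact p.Prime]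

theorem pow_dvd_mul_of_le_padicValInt_add {a b : ℤ} {N : ℕ}
    (hN : a ≠ 0 → b ≠ 0 → N ≤ padicValInt p a + padicValInt p b) : (p : ℤ) ^ N ∣ a * b := by
  rcases eq_or_ne a 0 with rfl | ha
  · simp
  rcases eq_or_ne b 0 with rfl | hb
  · simp
  rw [padicValInt_dvd_iff, padicValInt.mul ha hb]
  exact Or.inr (hN ha hb)

theorem padicValInt_eq_of_pow_succ_dvd_sub {a b : ℤ} (hb : b ≠ 0)
    (hab : (p : ℤ) ^ (padicValInt p b + 1) ∣ a - b) :
    a ≠ 0 ∧ padicValInt p a = padicValInt p b := by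
  have hb' : ¬ (p : ℤ) ^ (padicValInt p b + 1) ∣ b := by
    rw [padicValInt_dvd_iff]; omega
  have ha : ¬ (p : ℤ) ^ (padicValInt p b + 1) ∣ a := fun ha => hb' (by simpa using dvd_sub ha hab)
  have ha' : (p : ℤ) ^ padicValInt p b ∣ a := by
    simpa using dvd_add ((pow_dvd_pow _ (Nat.le_succ _)).trans hab) (padicValInt_dvd b)
  rw [padicValInt_dvd_iff] at ha ha'
  omega

theorem pow_succ_dvd_sum_coeff_mul {s : Finset (ℕ × ℕ)} {n N : ℕ}
    (hs : ∀ x ∈ s, x.1 + x.2 = n)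
    (hlt : ∀ x ∈ s, g.coeff x.1 ≠ 0 → h.coeff x.2 ≠ 0 →
      m * N + k * n < coeffWeight p m k g x.1 + coeffWeight p m k h x.2) :
    (p : ℤ) ^ (N + 1) ∣ ∑ x ∈ s, g.coeff x.1 * h.coeff x.2 := by
  refine dvd_sum fun x hx => pow_dvd_mul_of_le_padicValInt_add fun hg hh => ?_
  have hkn : (k : ℤ) * x.1 + k * x.2 = k * n := by
    rw [← mul_add]; exact_mod_cast congrArg (k * ·) (hs x hx)
  have hmul : (m : ℤ) * N < m * (padicValInt p (g.coeff x.1) + padicValInt p (h.coeff x.2)) := by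
    have := hlt x hx hg hh
    simp only [coeffWeight] at this
    linarith
  have := lt_of_mul_lt_mul_left hmul (Int.natCast_nonneg m)
  omega

theorem lt_coeffWeight_mul {n : ℕ} {B : ℤ} (hn : (g * h).coeff n ≠ 0)
    (hB : ∀ x ∈ antidiagonal n, g.coeff x.1 ≠ 0 → h.coeff x.2 ≠ 0 →
      B < coeffWeight p m k g x.1 + coeffWeight p m k h x.2) :
    B < coeffWeight p m k (g * h) n := by
  by_contra! hle
  have hdvd := pow_succ_dvd_sum_coeff_mul (N := padicValInt p ((g * h).coeff n))
    (fun x hx => mem_antidiagonal.mp hx) fun x hx hg hh => hle.trans_lt (hB x hx hg hh)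
  rw [← coeff_mul, padicValInt_dvd_iff] at hdvd
  omega

theorem coeffWeight_mul_add (hgi : g.coeff i ≠ 0) (hhj : h.coeff j ≠ 0)
    (hlt : ∀ x ∈ antidiagonal (i + j), x ≠ (i, j) → g.coeff x.1 ≠ 0 → h.coeff x.2 ≠ 0 →
      coeffWeight p m k g i + coeffWeight p m k h j <
        coeffWeight p m k g x.1 + coeffWeight p m k h x.2) :
    (g * h).coeff (i + j) ≠ 0 ∧
      coeffWeight p m k (g * h) (i + j) = coeffWeight p m k g i + coeffWeight p m k h j := by
  have hval := padicValInt.mul (p := p) hgi hhj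
  have hrest : (p : ℤ) ^ (padicValInt p (g.coeff i * h.coeff j) + 1) ∣
      (g * h).coeff (i + j) - g.coeff i * h.coeff j := by
    have hij : (i, j) ∈ antidiagonal (i + j) := mem_antidiagonal.mpr rfl
    rw [coeff_mul, ← add_sum_erase _ _ hij, add_sub_cancel_left]
    refine pow_succ_dvd_sum_coeff_mul (m := m) (k := k)
      (fun x hx => mem_antidiagonal.mp (mem_of_mem_erase hx))
      fun x hx hg hh => ?_
    convert hlt x (mem_of_mem_erase hx) (ne_of_mem_erase hx) hg hh using 1
    simp only [coeffWeight, hval]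
    push_cast
    ring
  obtain ⟨hne, heq⟩ := padicValInt_eq_of_pow_succ_dvd_sub (mul_ne_zero hgi hhj) hrest
  refine ⟨hne, ?_⟩
  simp only [coeffWeight, heq, hval]
  push_cast
  ring

theorem IsFirstMinWeight.mul (hi : IsFirstMinWeight p m k g i)
    (hj : IsFirstMinWeight p m k h j) :
    IsFirstMinWeight p m k (g * h) (i + j) := by
  obtain ⟨hne, heq⟩ := coeffWeight_mul_add (p := p) (m := m) (k := k) hi.1 hj.1
    fun x hx hxne hg hh => hi.add_lt hj hg hh (by
      rw [Ne, Prod.ext_iff] at hxne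
      have := mem_antidiagonal.mp hx
      omega)
  refine ⟨hne, fun n hn => ⟨?_, fun hlt => ?_⟩⟩
  · have := lt_coeffWeight_mul (B := coeffWeight p m k g i + coeffWeight p m k h j - 1) hn
      fun x _ hg hh => by linarith [(hi.2 _ hg).1, (hj.2 _ hh).1]
    omega
  · rw [heq]
    exact lt_coeffWeight_mul hn fun x hx hg hh => hi.add_lt hj hg hh (by
      have := mem_antidiagonal.mp hx
      omega)

theorem IsLastMinWeight.mul (hi : IsLastMinWeight p m k g i)
    (hj : IsLastMinWeight p m k h j) :
    IsLastMinWeight p m k (g * h) (i + j) := by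
  obtain ⟨hne, heq⟩ := coeffWeight_mul_add (p := p) (m := m) (k := k) hi.1 hj.1
    fun x hx hxne hg hh => hi.add_lt hj hg hh (by
      rw [Ne, Prod.ext_iff] at hxne
      have := mem_antidiagonal.mp hx
      omega)
  refine ⟨hne, fun n hn => ⟨?_, fun hlt => ?_⟩⟩
  · have := lt_coeffWeight_mul (B := coeffWeight p m k g i + coeffWeight p m k h j - 1) hn
      fun x _ hg hh => by linarith [(hi.2 _ hg).1, (hj.2 _ hh).1]
    omega
  · rw [heq]
    exact lt_coeffWeight_mul hn fun x hx hg hh => hi.add_lt hj hg hh (by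
      have := mem_antidiagonal.mp hx
      omega)

theorem natDegree_eq_zero_or_natDegree_eq_zero (hcop : k.Coprime m)
    (hdeg : (g * h).natDegree = m) (hfirst : IsFirstMinWeight p m k (g * h) 0)
    (hlast : IsLastMinWeight p m k (g * h) m) : g.natDegree = 0 ∨ h.natDegree = 0 := by
  have hgh : g * h ≠ 0 := fun h0 => hfirst.1 (by rw [h0, coeff_zero])
  have hg := left_ne_zero_of_mul hgh
  have hh := right_ne_zero_of_mul hgh
  obtain ⟨i₁, hi₁⟩ := exists_isFirstMinWeight (p := p) (m := m) (k := k) hg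
  obtain ⟨j₁, hj₁⟩ := exists_isFirstMinWeight (p := p) (m := m) (k := k) hh
  obtain ⟨i₂, hi₂⟩ := exists_isLastMinWeight (p := p) (m := m) (k := k) hg
  obtain ⟨j₂, hj₂⟩ := exists_isLastMinWeight (p := p) (m := m) (k := k) hh
  have h₁ : i₁ + j₁ = 0 := (hi₁.mul hj₁).unique hfirst
  have h₂ : i₂ + j₂ = m := (hi₂.mul hj₂).unique hlast
  have hmi := hi₁.dvd_sub hi₂ hcop
  have hmj := hj₁.dvd_sub hj₂ hcop
  rw [show i₁ = 0 by omega, Nat.cast_zero, sub_zero, Int.natCast_dvd_natCast] at hmi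
  rw [show j₁ = 0 by omega, Nat.cast_zero, sub_zero, Int.natCast_dvd_natCast] at hmj
  have hi₂deg := le_natDegree_of_ne_zero hi₂.1
  have hj₂deg := le_natDegree_of_ne_zero hj₂.1
  rw [natDegree_mul hg hh] at hdeg
  by_contra! hpos
  have hi₂0 := Nat.eq_zero_of_dvd_of_lt hmi (by omega)
  have hj₂0 := Nat.eq_zero_of_dvd_of_lt hmj (by omega)
  omega

theorem isFirstMinWeight_zero_and_isLastMinWeight {f : ℤ[X]} (hdeg : f.natDegree = m)
    (hlead : ¬ (p : ℤ) ∣ f.coeff m) (hdvd : ∀ i < m, (p : ℤ) ^ k ∣ f.coeff i)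
    (hndvd0 : ¬ (p : ℤ) ^ (k + 1) ∣ f.coeff 0) :
    IsFirstMinWeight p m k f 0 ∧ IsLastMinWeight p m k f m := by
  have hbound : ∀ u, f.coeff u ≠ 0 → (m * k : ℤ) ≤ coeffWeight p m k f u := by
    intro u hu
    rcases (hdeg ▸ le_natDegree_of_ne_zero hu : u ≤ m).lt_or_eq with hlt | rfl
    · have hk : k ≤ padicValInt p (f.coeff u) :=
        ((padicValInt_dvd_iff _ _).mp (hdvd u hlt)).resolve_left hu
      have : (m * k : ℤ) ≤ m * padicValInt p (f.coeff u) := by gcongr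
      have : (0 : ℤ) ≤ k * u := by positivity
      simp only [coeffWeight]
      linarith
    · simp [coeffWeight, padicValInt.eq_zero_of_not_dvd hlead, mul_comm]
  have hv0 : padicValInt p (f.coeff 0) ≤ k := by
    by_contra! hk
    exact hndvd0 ((padicValInt_dvd_iff _ _).mpr (Or.inr hk))
  have hW0 : coeffWeight p m k f 0 ≤ m * k := by
    simp only [coeffWeight, CharP.cast_eq_zero, mul_zero, add_zero]
    exact_mod_cast Nat.mul_le_mul_left m hv0
  have hWm : coeffWeight p m k f m = m * k := by
    simp [coeffWeight, padicValInt.eq_zero_of_not_dvd hlead, mul_comm]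
  have hf0 : f.coeff 0 ≠ 0 := fun h0 => hndvd0 (h0 ▸ dvd_zero _)
  have hfm : f.coeff m ≠ 0 := fun h0 => hlead (h0 ▸ dvd_zero _)
  refine ⟨⟨hf0, fun u hu => ⟨hW0.trans (hbound u hu), fun h => absurd h (Nat.not_lt_zero u)⟩⟩,
    ⟨hfm, fun u hu => ⟨hWm ▸ hbound u hu, fun hmu => ?_⟩⟩⟩
  exact absurd (hdeg ▸ le_natDegree_of_ne_zero hu) (Nat.not_le_of_lt hmu)

end Prime

theorem IsPrimitive.isUnit_of_dvd_of_natDegree_eq_zero {R : Type*} [CommSemiring R]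
    {f g : R[X]} (hf : f.IsPrimitive) (hgf : g ∣ f) (hg : g.natDegree = 0) : IsUnit g := by
  rw [eq_C_of_natDegree_eq_zero hg] at hgf ⊢
  exact isUnit_C.mpr (hf _ hgf)

end Polynomial

theorem stmt2_general (m : ℕ) (a : ℕ → ℤ) (f : ℤ[X])
    (hf : f = ∑ i ∈ range (m + 1), C (a i) * X ^ i)
    (hprim : f.IsPrimitive)
    (p : ℕ) (hp : p.Prime) (k : ℕ) (hm : 1 ≤ m)
    (hcop : Nat.Coprime k m)
    (hndvd : ¬ (p : ℤ) ∣ a m)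
    (hdvd : ∀ i < m, (p : ℤ) ^ k ∣ a i)
    (hndvd0 : ¬ (p : ℤ) ^ (k + 1) ∣ a 0) :
    Irreducible f := by
  have : Fact p.Prime := ⟨hp⟩
  have hcoeff : ∀ n, f.coeff n = if n ≤ m then a n else 0 := fun n => by
    simp [hf, coeff_X_pow]
  have hcoeff_of_le : ∀ n ≤ m, f.coeff n = a n := fun n hn => by rw [hcoeff, if_pos hn]
  have hdeg : f.natDegree = m :=
    natDegree_eq_of_le_of_coeff_ne_zero
      (natDegree_le_iff_coeff_eq_zero.mpr fun n hn => by rw [hcoeff, if_neg (by omega)])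
      fun h0 => hndvd (hcoeff_of_le m le_rfl ▸ h0 ▸ dvd_zero _)
  obtain ⟨hfirst, hlast⟩ := isFirstMinWeight_zero_and_isLastMinWeight hdeg
    (hcoeff_of_le m le_rfl ▸ hndvd) (fun i hi => hcoeff_of_le i hi.le ▸ hdvd i hi)
    (hcoeff_of_le 0 (Nat.zero_le m) ▸ hndvd0)
  refine ⟨fun hu => by have := natDegree_eq_zero_of_isUnit hu; omega, fun g h hgh => ?_⟩
  subst hgh
  exact (natDegree_eq_zero_or_natDegree_eq_zero hcop hdeg hfirst hlast).imp
    (hprim.isUnit_of_dvd_of_natDegree_eq_zero (dvd_mul_right g h))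
    (hprim.isUnit_of_dvd_of_natDegree_eq_zero (dvd_mul_left h g))

/-- Case `j = m` of Theorem 1: an Eisenstein-type irreducibility criterion. -/
theorem stmt2 (m : ℕ) (a : ℕ → ℤ) (f : ℤ[X])
    (hf : f = ∑ i ∈ range (m + 1), C (a i) * X ^ i)
    (hprim : f.IsPrimitive)
    (p : ℕ) (hp : p.Prime) (k : ℕ) (hk : 1 ≤ k) (hm : 1 ≤ m)
    (hcop : Nat.Coprime k m)
    (hndvd : ¬ (p : ℤ) ∣ a m)
    (hdvd : ∀ i < m, (p : ℤ) ^ k ∣ a i)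
    (hndvd0 : ¬ (p : ℤ) ^ (k + 1) ∣ a 0) :
    Irreducible f :=
  stmt2_general m a f hf hprim p hp k hm hcop hndvd hdvd hndvd0
end

section
/- Let f = a_0 + a_1 z + ... + a_m z^m ∈ ℤ[z] be primitive with m ≥ 2, and suppose there exist a prime p and positive integers k and m−1 coprime such that p does not divide a_{m-1}, p^k divides a_i for i = 0, ..., m−2, p^{k+1} does not divide a_0, and f has no rational root. Then f is irreducible in ℤ[z]. -/
/-!
Weight the `i`-th coefficient `c` of an integer polynomial by `(m - 1) v_p(c) + k i`. Under the
hypotheses the weights of `f` reach their minimum `k (m - 1)` exactly at `0` and `m - 1`: this is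
the edge of slope `-k / (m - 1)` of the Newton polygon. The last index where the weight is minimal
is additive under multiplication, since at the sum of the two last minimisers a single product of
coefficients has strictly smaller valuation than all the others. So if `f = g h` with last
minimisers `I` and `J`, then `I + J = m - 1`, and comparing with the weights at index `0` gives
`m - 1 ∣ k I`, hence `m - 1 ∣ I`. One of `g`, `h` thus has degree at least `m - 1` and the other
at most one, which primitivity and the absence of rational roots rule out.
-/

open Polynomial Finset

section LastArgmin

variable {ι α : Type*} [LinearOrder ι] [LinearOrder α]

structure IsLastArgmin (w : ι → α) (s : Finset ι) (I : ι) : Prop where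
  mem : I ∈ s
  le : ∀ i ∈ s, w I ≤ w i
  lt : ∀ i ∈ s, I < i → w I < w i

theorem exists_isLastArgmin (w : ι → α) {s : Finset ι} (hs : s.Nonempty) :
    ∃ I, IsLastArgmin w s I := by
  obtain ⟨i₀, hi₀, hmin⟩ := s.exists_min_image w hs
  obtain ⟨I, hI, hmax⟩ :=
    (s.filter (w · = w i₀)).exists_max_image id ⟨i₀, by simp [hi₀]⟩
  rw [mem_filter] at hI
  refine ⟨I, hI.1, fun i hi => hI.2 ▸ hmin i hi, fun i hi hIi => ?_⟩
  refine lt_of_le_of_ne (hI.2 ▸ hmin i hi) fun h => ?_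
  exact (hmax i (mem_filter.2 ⟨hi, h ▸ hI.2⟩)).not_gt hIi

theorem IsLastArgmin.unique {w : ι → α} {s : Finset ι} {I J : ι}
    (hI : IsLastArgmin w s I) (hJ : IsLastArgmin w s J) : I = J := by
  by_contra hne
  rcases lt_or_gt_of_ne hne with h | h
  · exact (hI.lt J hJ.mem h).not_ge (hJ.le I hI.mem)
  · exact (hJ.lt I hI.mem h).not_ge (hI.le J hJ.mem)

theorem IsLastArgmin.add_lt_add {β : Type*} [AddCommMonoid β] [LinearOrder β]
    [IsOrderedCancelAddMonoid β] {w w' : ι → β} {s s' : Finset ι} {I J i j : ι}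
    (hI : IsLastArgmin w s I) (hJ : IsLastArgmin w' s' J) (hi : i ∈ s) (hj : j ∈ s')
    (h : I < i ∨ J < j) : w I + w' J < w i + w' j :=
  h.elim (fun h => add_lt_add_of_lt_of_le (hI.lt i hi h) (hJ.le j hj))
    fun h => add_lt_add_of_le_of_lt (hI.le i hi) (hJ.lt j hj h)

end LastArgmin

section PadicWeight

variable {p : ℕ}

/-- Minimising `a * v_p(c_i) + b * i` over the support of `∑ c_i X^i` finds where a line of slope
`-b / a` supports the Newton polygon; the last minimiser is the right end of that contact. -/
def padicWeight (p a b : ℕ) (g : ℤ[X]) (i : ℕ) : ℕ := a * padicValInt p (g.coeff i) + b * i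

theorem padicWeight_of_not_dvd {a b i : ℕ} {F : ℤ[X]} (h : ¬ (p : ℤ) ∣ F.coeff i) :
    padicWeight p a b F i = b * i := by
  simp [padicWeight, padicValInt.eq_zero_of_not_dvd h]

variable [Fact p.Prime]

theorem padicValInt_add_of_pow_succ_dvd {x y : ℤ} (hx : x ≠ 0)
    (hy : (p : ℤ) ^ (padicValInt p x + 1) ∣ y) :
    x + y ≠ 0 ∧ padicValInt p (x + y) = padicValInt p x := by
  have hnx : ¬ (p : ℤ) ^ (padicValInt p x + 1) ∣ x := by
    simp [padicValInt_dvd_iff, hx]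
  have hxy : ¬ (p : ℤ) ^ (padicValInt p x + 1) ∣ x + y := fun h =>
    hnx (by simpa using dvd_sub h hy)
  have hne : x + y ≠ 0 := fun h => hxy (h ▸ dvd_zero _)
  have hge : padicValInt p x ≤ padicValInt p (x + y) :=
    ((padicValInt_dvd_iff _ _).1 (dvd_add (padicValInt_dvd x)
      ((pow_dvd_pow _ (Nat.le_succ _)).trans hy))).resolve_left hne
  have hlt : padicValInt p (x + y) < padicValInt p x + 1 := by
    by_contra! h
    exact hxy ((pow_dvd_pow _ h).trans (padicValInt_dvd _))
  exact ⟨hne, by omega⟩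

theorem exists_padicValInt_le_coeff_mul (g h : ℤ[X]) {t : ℕ} (ht : t ∈ (g * h).support) :
    ∃ i ∈ g.support, ∃ j ∈ h.support, i + j = t ∧
      padicValInt p (g.coeff i) + padicValInt p (h.coeff j) ≤
        padicValInt p ((g * h).coeff t) := by
  set T := (antidiagonal t).filter fun ij => g.coeff ij.1 * h.coeff ij.2 ≠ 0
  have hT : T.Nonempty := by
    by_contra hT
    refine mem_support_iff.1 ht ?_
    rw [coeff_mul]
    exact sum_eq_zero fun ij hij => by
      by_contra h0
      exact hT ⟨ij, mem_filter.2 ⟨hij, h0⟩⟩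
  obtain ⟨⟨i, j⟩, hij, hmin⟩ :=
    T.exists_min_image (fun ij => padicValInt p (g.coeff ij.1) + padicValInt p (h.coeff ij.2)) hT
  rw [mem_filter, HasAntidiagonal.mem_antidiagonal] at hij
  refine ⟨i, mem_support_iff.2 (left_ne_zero_of_mul hij.2), j,
    mem_support_iff.2 (right_ne_zero_of_mul hij.2), hij.1, ?_⟩
  refine ((padicValInt_dvd_iff _ _).1 ?_).resolve_left (mem_support_iff.1 ht)
  rw [coeff_mul]
  refine dvd_sum fun ij hij' => ?_
  by_cases h0 : g.coeff ij.1 * h.coeff ij.2 = 0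
  · rw [h0]; exact dvd_zero _
  · exact (pow_dvd_pow _ (hmin ij (mem_filter.2 ⟨hij', h0⟩))).trans
      (by rw [pow_add]; exact mul_dvd_mul (padicValInt_dvd _) (padicValInt_dvd _))

theorem padicValInt_coeff_mul_of_isLastArgmin {a b : ℕ} {g h : ℤ[X]} {I J : ℕ}
    (hI : IsLastArgmin (padicWeight p a b g) g.support I)
    (hJ : IsLastArgmin (padicWeight p a b h) h.support J) :
    (g * h).coeff (I + J) ≠ 0 ∧ padicValInt p ((g * h).coeff (I + J)) =
      padicValInt p (g.coeff I) + padicValInt p (h.coeff J) := by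
  have hgI := mem_support_iff.1 hI.mem
  have hhJ := mem_support_iff.1 hJ.mem
  have hsplit : (g * h).coeff (I + J) = g.coeff I * h.coeff J +
      ∑ ij ∈ (antidiagonal (I + J)).erase (I, J), g.coeff ij.1 * h.coeff ij.2 := by
    rw [coeff_mul, ← add_sum_erase _ _ (mem_antidiagonal.2 rfl : (I, J) ∈ antidiagonal (I + J))]
  rw [hsplit, ← padicValInt.mul hgI hhJ]
  refine padicValInt_add_of_pow_succ_dvd (mul_ne_zero hgI hhJ) (dvd_sum fun ⟨i, j⟩ hij => ?_)
  rw [mem_erase, ne_eq, Prod.mk.injEq, HasAntidiagonal.mem_antidiagonal] at hij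
  by_cases h0 : g.coeff i * h.coeff j = 0
  · rw [h0]; exact dvd_zero _
  have hi : i ∈ g.support := mem_support_iff.2 (left_ne_zero_of_mul h0)
  have hj : j ∈ h.support := mem_support_iff.2 (right_ne_zero_of_mul h0)
  -- the other terms lie strictly above the supporting line, so have strictly larger valuation
  have hweight : padicWeight p a b g I + padicWeight p a b h J <
      padicWeight p a b g i + padicWeight p a b h j :=
    hI.add_lt_add hJ hi hj (by omega)
  have hval : padicValInt p (g.coeff I) + padicValInt p (h.coeff J) <
      padicValInt p (g.coeff i) + padicValInt p (h.coeff j) := by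
    have hb : b * i + b * j = b * I + b * J := by rw [← mul_add, ← mul_add, hij.2]
    simp only [padicWeight] at hweight
    exact Nat.lt_of_mul_lt_mul_left (a := a) (by linarith)
  rw [padicValInt.mul hgI hhJ]
  exact (pow_dvd_pow _ hval).trans (by
    rw [pow_add]; exact mul_dvd_mul (padicValInt_dvd _) (padicValInt_dvd _))

theorem IsLastArgmin.mul {a b : ℕ} {g h : ℤ[X]} {I J : ℕ}
    (hI : IsLastArgmin (padicWeight p a b g) g.support I)
    (hJ : IsLastArgmin (padicWeight p a b h) h.support J) :
    IsLastArgmin (padicWeight p a b (g * h)) (g * h).support (I + J) ∧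
      padicWeight p a b (g * h) (I + J) = padicWeight p a b g I + padicWeight p a b h J := by
  obtain ⟨hne, hval⟩ := padicValInt_coeff_mul_of_isLastArgmin hI hJ
  have hcorner : padicWeight p a b (g * h) (I + J) =
      padicWeight p a b g I + padicWeight p a b h J := by
    simp only [padicWeight, hval]; ring
  have hbound : ∀ t ∈ (g * h).support, ∃ i ∈ g.support, ∃ j ∈ h.support, i + j = t ∧
      padicWeight p a b g i + padicWeight p a b h j ≤ padicWeight p a b (g * h) t := by
    intro t ht
    obtain ⟨i, hi, j, hj, rfl, hle⟩ := exists_padicValInt_le_coeff_mul (p := p) g h ht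
    refine ⟨i, hi, j, hj, rfl, ?_⟩
    simp only [padicWeight]
    nlinarith
  refine ⟨⟨mem_support_iff.2 hne, fun t ht => ?_, fun t ht hlt => ?_⟩, hcorner⟩
  · obtain ⟨i, hi, j, hj, -, hle⟩ := hbound t ht
    rw [hcorner]
    exact (add_le_add (hI.le i hi) (hJ.le j hj)).trans hle
  · obtain ⟨i, hi, j, hj, rfl, hle⟩ := hbound t ht
    rw [hcorner]
    exact (hI.add_lt_add hJ hi hj (by omega)).trans_le hle

theorem isLastArgmin_padicWeight {n k : ℕ} (hk : 1 ≤ k) {F : ℤ[X]}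
    (hdvd : ∀ i < n, (p : ℤ) ^ k ∣ F.coeff i) (hndvd : ¬ (p : ℤ) ∣ F.coeff n) :
    IsLastArgmin (padicWeight p n k F) F.support n := by
  have hFn : F.coeff n ≠ 0 := fun h => hndvd (h ▸ dvd_zero _)
  have hwn : padicWeight p n k F n = k * n := padicWeight_of_not_dvd hndvd
  have hlt : ∀ t, n < t → padicWeight p n k F n < padicWeight p n k F t := fun t ht => by
    rw [hwn, padicWeight]
    nlinarith
  refine ⟨mem_support_iff.2 hFn, fun t ht => ?_, fun t _ => hlt t⟩
  rcases lt_trichotomy t n with htn | rfl | htn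
  · have hv : k ≤ padicValInt p (F.coeff t) :=
      ((padicValInt_dvd_iff _ _).1 (hdvd t htn)).resolve_left (mem_support_iff.1 ht)
    rw [hwn, padicWeight]
    nlinarith
  · exact le_rfl
  · exact (hlt t htn).le

theorem le_natDegree_or_le_natDegree_of_padicValInt {n k : ℕ} (hk : 1 ≤ k) (hcop : k.Coprime n)
    {g h : ℤ[X]} (hv0 : padicValInt p ((g * h).coeff 0) = k)
    (hdvd : ∀ i < n, (p : ℤ) ^ k ∣ (g * h).coeff i)
    (hndvd : ¬ (p : ℤ) ∣ (g * h).coeff n) :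
    n ≤ g.natDegree ∨ n ≤ h.natDegree := by
  have h0 : g.coeff 0 * h.coeff 0 ≠ 0 := fun h0 => by
    rw [mul_coeff_zero, h0, padicValInt.zero] at hv0; omega
  have hg0 := mem_support_iff.2 (left_ne_zero_of_mul h0)
  have hh0 := mem_support_iff.2 (right_ne_zero_of_mul h0)
  rw [mul_coeff_zero, padicValInt.mul (left_ne_zero_of_mul h0) (right_ne_zero_of_mul h0)] at hv0
  obtain ⟨I, hI⟩ := exists_isLastArgmin (padicWeight p n k g) ⟨0, hg0⟩
  obtain ⟨J, hJ⟩ := exists_isLastArgmin (padicWeight p n k h) ⟨0, hh0⟩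
  obtain ⟨hIJ, hw⟩ := hI.mul hJ
  have hsum : I + J = n := hIJ.unique (isLastArgmin_padicWeight hk hdvd hndvd)
  have hgI := hI.le 0 hg0
  have hhJ := hJ.le 0 hh0
  -- the weights at the last minimisers add up to those at `0`, so both inequalities are equalities
  have hgI0 : n * padicValInt p (g.coeff I) + k * I = n * padicValInt p (g.coeff 0) := by
    rw [hsum, padicWeight_of_not_dvd hndvd] at hw
    simp only [padicWeight] at hw hgI hhJ
    nlinarith
  have hdI : n ∣ I :=
    hcop.symm.dvd_of_dvd_mul_left <|
      (Nat.dvd_add_right (dvd_mul_right n _)).1 (hgI0 ▸ dvd_mul_right n _)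
  rcases Nat.eq_zero_or_pos I with hI0 | hIpos
  · exact Or.inr (le_natDegree_of_mem_supp n ((show J = n by omega) ▸ hJ.mem))
  · exact Or.inl ((Nat.le_of_dvd hIpos hdI).trans (le_natDegree_of_mem_supp I hI.mem))

end PadicWeight

theorem Polynomial.IsPrimitive.isUnit_of_dvd_of_natDegree_le_one {R K : Type*} [CommRing R]
    [IsDomain R] [Field K] [Algebra R K] [IsFractionRing R K] {f g : R[X]} (hf : f.IsPrimitive)
    (hroot : ∀ x : K, aeval x f ≠ 0) (hgf : g ∣ f) (hg : g.natDegree ≤ 1) : IsUnit g := by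
  rcases hg.lt_or_eq with hg0 | hg1
  · rw [eq_C_of_natDegree_eq_zero (Nat.lt_one_iff.1 hg0)] at hgf ⊢
    exact isUnit_C.2 (hf _ hgf)
  · have hdeg : (g.map (algebraMap R K)).degree = 1 :=
      (degree_eq_iff_natDegree_eq_of_pos one_pos).2
        ((natDegree_map_eq_of_injective (IsFractionRing.injective R K) g).trans hg1)
    obtain ⟨x, hx⟩ := exists_root_of_degree_eq_one hdeg
    obtain ⟨q, rfl⟩ := hgf
    exact absurd (by rw [aeval_def, eval₂_eq_eval_map, Polynomial.map_mul, eval_mul, hx.eq_zero,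
      zero_mul]) (hroot x)

/-- Case `j = m - 1` of Theorem 1: irreducibility when `f` has no rational root. -/
theorem stmt3 (m : ℕ) (a : ℕ → ℤ) (f : ℤ[X])
    (hf : f = ∑ i ∈ range (m + 1), C (a i) * X ^ i)
    (hprim : f.IsPrimitive) (hm : 2 ≤ m)
    (p : ℕ) (hp : p.Prime) (k : ℕ) (hk : 1 ≤ k)
    (hcop : Nat.Coprime k (m - 1))
    (hndvd : ¬ (p : ℤ) ∣ a (m - 1))
    (hdvd : ∀ i < m - 1, (p : ℤ) ^ k ∣ a i)
    (hndvd0 : ¬ (p : ℤ) ^ (k + 1) ∣ a 0)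
    (hroot : ∀ q : ℚ, aeval q f ≠ 0) :
    Irreducible f := by
  have : Fact p.Prime := ⟨hp⟩
  have hcoeff : ∀ i ≤ m, f.coeff i = a i := fun i hi => by
    simp [hf, coeff_X_pow, Nat.lt_succ_of_le hi]
  have hdeg : f.natDegree ≤ m := hf ▸ natDegree_sum_le_of_forall_le _ _ fun i hi =>
    natDegree_C_mul_X_pow_le (a i) i |>.trans (Nat.lt_succ_iff.1 (mem_range.1 hi))
  have hv0 : padicValInt p (a 0) = k := by
    have ha0 : a 0 ≠ 0 := fun h => hndvd0 (h ▸ dvd_zero _)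
    have hle := ((padicValInt_dvd_iff _ _).1 (hdvd 0 (by omega))).resolve_left ha0
    have hlt := mt (padicValInt_dvd_iff (k + 1) (a 0)).2 hndvd0
    omega
  refine ⟨fun hu => ?_, fun g h hgh => ?_⟩
  · have hm1 : f.coeff (m - 1) ≠ 0 := by
      rw [hcoeff _ (by omega)]; exact fun h => hndvd (h ▸ dvd_zero _)
    have := le_natDegree_of_ne_zero hm1
    have := natDegree_eq_zero_of_isUnit hu
    omega
  · subst hgh
    have hfg := hprim.ne_zero
    rw [natDegree_mul (left_ne_zero_of_mul hfg) (right_ne_zero_of_mul hfg)] at hdeg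
    rcases le_natDegree_or_le_natDegree_of_padicValInt hk hcop (hcoeff 0 (by omega) ▸ hv0)
      (fun i hi => hcoeff i (by omega) ▸ hdvd i hi) (by rwa [hcoeff (m - 1) (by omega)])
      with hg | hh
    · exact Or.inr (hprim.isUnit_of_dvd_of_natDegree_le_one hroot (dvd_mul_left h g) (by omega))
    · exact Or.inl (hprim.isUnit_of_dvd_of_natDegree_le_one hroot (dvd_mul_right g h) (by omega))
end

section
/- Let f = a_0 + a_1 z + ... + a_m z^m ∈ ℤ[z] be primitive with a_0 = ± p d for a prime p and positive integer d with p not dividing d, and suppose every complex zero of f satisfies |z| > d. Then f is irreducible in ℤ[z]. -/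
open Polynomial Finset

/-!
Write `f = g * h`. As `p` divides `f(0) = g(0) h(0)` exactly once, one factor, say `h`, has
`p ∤ h(0)`, so `h(0) ∣ d`. If `h` had positive degree, then `|h(0)| = |lc h| · ∏ |roots of h| > d`,
since the roots of `h` are roots of `f` and all have absolute value `> d ≥ 1`. Hence `h` is a
constant dividing the primitive polynomial `f`, i.e. a unit.
-/

theorem norm_multiset_prod {K : Type*} [NormedField K] (s : Multiset K) :
    ‖s.prod‖ = (s.map (‖·‖)).prod :=
  map_multiset_prod (normHom : K →*₀ ℝ) s

theorem Multiset.lt_prod_of_forall_lt {R : Type*} [CommSemiring R] [PartialOrder R]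
    [IsStrictOrderedRing R] {r : R} {s : Multiset R} (hs : s ≠ 0) (hr : 1 ≤ r)
    (h : ∀ x ∈ s, r < x) : r < s.prod := by
  obtain ⟨a, ha⟩ := exists_mem_of_ne_zero hs
  obtain ⟨t, rfl⟩ := exists_cons_of_mem ha
  have ht : 1 ≤ t.prod := one_le_prod fun x hx => hr.trans (h x (mem_cons_of_mem hx)).le
  have hra : r < a := h a ha
  calc r < a := hra
    _ = a * 1 := (mul_one a).symm
    _ ≤ a * t.prod := mul_le_mul_of_nonneg_left ht (zero_le_one.trans (hr.trans hra.le))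
    _ = (a ::ₘ t).prod := (prod_cons a t).symm

theorem Polynomial.lt_norm_coeff_zero_of_forall_lt_norm_root {K : Type*} [NormedField K]
    [IsAlgClosed K] {f : K[X]} (hf : 0 < f.natDegree) (hlc : 1 ≤ ‖f.leadingCoeff‖) {r : ℝ}
    (hr : 1 ≤ r) (hroots : ∀ z ∈ f.roots, r < ‖z‖) : r < ‖f.coeff 0‖ := by
  have hsplit : f.Splits := IsAlgClosed.splits f
  have hprod : r < ‖f.roots.prod‖ := by
    rw [norm_multiset_prod]
    refine Multiset.lt_prod_of_forall_lt ?_ hr ?_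
    · rw [Ne, Multiset.map_eq_zero, ← Multiset.card_eq_zero, ← hsplit.natDegree_eq_card_roots]
      exact hf.ne'
    · simpa only [Multiset.mem_map, forall_exists_index, and_imp, forall_apply_eq_imp_iff₂]
        using hroots
  rw [hsplit.coeff_zero_eq_leadingCoeff_mul_prod_roots, norm_mul, norm_mul, norm_pow, norm_neg,
    norm_one, one_pow, one_mul]
  exact hprod.trans_le (le_mul_of_one_le_left (norm_nonneg _) hlc)

theorem Polynomial.lt_abs_coeff_zero_of_forall_lt_norm_root {f : ℤ[X]} (hf : 0 < f.natDegree)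
    {r : ℝ} (hr : 1 ≤ r) (hroots : ∀ z : ℂ, aeval z f = 0 → r < ‖z‖) :
    r < |(f.coeff 0 : ℝ)| := by
  have hinj : Function.Injective (algebraMap ℤ ℂ) := RingHom.injective_int _
  have hlc : 1 ≤ ‖(f.map (algebraMap ℤ ℂ)).leadingCoeff‖ := by
    rw [leadingCoeff_map_of_injective hinj, eq_intCast, Complex.norm_intCast]
    exact_mod_cast Int.one_le_abs (leadingCoeff_ne_zero.mpr (ne_zero_of_natDegree_gt hf))
  have hlt := lt_norm_coeff_zero_of_forall_lt_norm_root
    (by rwa [natDegree_map_eq_of_injective hinj]) hlc hr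
    (fun z hz => hroots z (mem_aroots.mp hz).2)
  simpa [coeff_map] using hlt

theorem Polynomial.natDegree_eq_zero_of_dvd_of_coeff_zero_dvd {f h : ℤ[X]} (hhf : h ∣ f)
    {d : ℤ} (hd : 0 < d) (hh0 : h.coeff 0 ∣ d)
    (hroots : ∀ z : ℂ, aeval z f = 0 → (d : ℝ) < ‖z‖) : h.natDegree = 0 := by
  by_contra hdeg
  have hlt := lt_abs_coeff_zero_of_forall_lt_norm_root (Nat.pos_of_ne_zero hdeg)
    (by exact_mod_cast hd) fun z hz => hroots z (aeval_eq_zero_of_dvd_aeval_eq_zero hhf hz)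
  have hle : |h.coeff 0| ≤ d := Int.le_of_dvd hd ((abs_dvd _ _).mpr hh0)
  rw [← Int.cast_abs] at hlt
  exact absurd hle (not_le.mpr (by exact_mod_cast hlt))

theorem Polynomial.IsPrimitive.isUnit_of_dvd_of_natDegree_eq_zero_s5 {R : Type*} [CommRing R]
    [IsDomain R] {f h : R[X]} (hf : f.IsPrimitive) (hhf : h ∣ f) (hh : h.natDegree = 0) :
    IsUnit h := by
  rw [eq_C_of_natDegree_eq_zero hh] at hhf ⊢
  exact isUnit_C.mpr (isPrimitive_iff_isUnit_of_C_dvd.mp hf _ hhf)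

theorem dvd_of_mul_eq_mul_of_not_dvd {M : Type*} [CommMonoidWithZero M] [IsCancelMulZero M]
    {p x y e : M} (hp : Prime p) (h : x * y = p * e) (hy : ¬ p ∣ y) : y ∣ e := by
  obtain ⟨c, rfl⟩ := (hp.dvd_or_dvd (h ▸ dvd_mul_right p e)).resolve_right hy
  rw [mul_assoc] at h
  exact ⟨c, by rw [mul_comm y]; exact (mul_left_cancel₀ hp.ne_zero h).symm⟩

theorem not_dvd_or_not_dvd_of_mul_eq_mul {M : Type*} [CommMonoidWithZero M] [IsCancelMulZero M]
    {p x y e : M} (hp : p ≠ 0) (h : x * y = p * e) (he : ¬ p ∣ e) : ¬ p ∣ x ∨ ¬ p ∣ y := by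
  by_contra! hxy
  exact he ((mul_dvd_mul_iff_left hp).mp (h ▸ mul_dvd_mul hxy.1 hxy.2))

theorem stmt5_general (m : ℕ) (a : ℕ → ℤ) (f : ℤ[X])
    (hf : f = ∑ i ∈ range (m + 1), C (a i) * X ^ i)
    (hprim : f.IsPrimitive)
    (p : ℕ) (hp : p.Prime) (d : ℤ) (hd : 0 < d)
    (hpd : ¬ (p : ℤ) ∣ d)
    (ε : ℤ) (hε : ε = 1 ∨ ε = -1)
    (ha0 : a 0 = ε * (p : ℤ) * d)
    (hroots : ∀ z : ℂ, aeval z f = 0 → (d : ℝ) < ‖z‖) :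
    Irreducible f := by
  have hpZ : Prime (p : ℤ) := Nat.prime_iff_prime_int.mp hp
  have hεu : IsUnit ε := Int.isUnit_iff.mpr hε
  have hf0 : f.coeff 0 = p * (ε * d) := by
    rw [mul_left_comm, ← mul_assoc, ← ha0, hf]
    simp [finsetSum_coeff, coeff_X_pow]
  have hpεd : ¬ (p : ℤ) ∣ ε * d := by rwa [hεu.dvd_mul_left]
  have key : ∀ g h : ℤ[X], g * h = f → ¬ (p : ℤ) ∣ h.coeff 0 → IsUnit h := by
    intro g h hgh hph
    have hh0 : h.coeff 0 ∣ d := hεu.dvd_mul_left.mp <|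
      dvd_of_mul_eq_mul_of_not_dvd hpZ (by rw [← mul_coeff_zero, hgh, hf0]) hph
    exact hprim.isUnit_of_dvd_of_natDegree_eq_zero_s5 (Dvd.intro_left g hgh)
      (natDegree_eq_zero_of_dvd_of_coeff_zero_dvd (Dvd.intro_left g hgh) hd hh0 hroots)
  refine ⟨fun hu => hpZ.not_isUnit ?_, fun g h hgh => ?_⟩
  · have hu0 := hu.map constantCoeff
    rw [constantCoeff_apply, hf0] at hu0
    exact isUnit_of_mul_isUnit_left hu0
  · rcases not_dvd_or_not_dvd_of_mul_eq_mul hpZ.ne_zero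
      (by rw [← mul_coeff_zero, ← hgh, hf0]) hpεd with hg | hh
    · exact .inl (key h g (by rw [hgh, mul_comm]) hg)
    · exact .inr (key g h hgh.symm hh)

/-- Case `k = 1` of Theorem 2: irreducibility criterion. -/
theorem stmt5 (m : ℕ) (a : ℕ → ℤ) (f : ℤ[X])
    (hf : f = ∑ i ∈ range (m + 1), C (a i) * X ^ i)
    (ham : a m ≠ 0) (hm : 1 ≤ m)
    (hprim : f.IsPrimitive)
    (p : ℕ) (hp : p.Prime) (d : ℤ) (hd : 0 < d)
    (hpd : ¬ (p : ℤ) ∣ d)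
    (ε : ℤ) (hε : ε = 1 ∨ ε = -1)
    (ha0 : a 0 = ε * (p : ℤ) * d)
    (hroots : ∀ z : ℂ, aeval z f = 0 → (d : ℝ) < ‖z‖) :
    Irreducible f :=
  stmt5_general m a f hf hprim p hp d hd hpd ε hε ha0 hroots
end

section
/- Let f = a_0 + a_1 z + ... + a_m z^m ∈ ℤ[z] be primitive with a_m = ± p d for a prime p and positive integer d with p not dividing d, such that every complex zero of f satisfies |z| > d, and |a_0/q| ≤ |a_m| where q is the smallest prime divisor of a_0. Then f is irreducible in ℤ[z]. -/
/-!
Suppose `f = g * h` with both factors nonconstant; as `p` is prime it divides the leading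
coefficient of one factor, say `g`. For a factor whose complex roots all lie outside the disc of
radius `d`, `|g(0)| = |lc g| * ∏ |roots| > |lc g| * d ^ deg g`. Hence `|g(0)| > p * d` and
`|h(0)| > d ≥ 1`, so `h(0)` has a prime factor, which divides `a₀` and is therefore at least
`q`.
Then `|a₀| = |g(0)| * |h(0)| > q * p * d = q * |a_m| ≥ |a₀|`.
-/

open Polynomial Finset

theorem Polynomial.Splits.norm_leadingCoeff_mul_pow_lt_norm_coeff_zero {K : Type*}
    [NormedField K] {g : K[X]} (hs : g.Splits) (hg : 0 < g.natDegree) {r : ℝ} (hr : 0 < r)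
    (hroots : ∀ z ∈ g.roots, r < ‖z‖) :
    ‖g.leadingCoeff‖ * r ^ g.natDegree < ‖g.coeff 0‖ := by
  have hg0 : g ≠ 0 := ne_zero_of_natDegree_gt hg
  have hcard := hs.natDegree_eq_card_roots
  have hprod : r ^ g.natDegree < (g.roots.map (‖·‖)).prod := by
    rw [hcard, ← Multiset.prod_replicate, ← Multiset.map_const']
    exact Multiset.prod_map_lt_prod_map (Multiset.card_pos.mp (hcard ▸ hg)) _ _
      (fun _ _ => hr) hroots
  rw [hs.coeff_zero_eq_leadingCoeff_mul_prod_roots, norm_mul, norm_mul, norm_pow, norm_neg,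
    norm_one, one_pow, one_mul, show ‖g.roots.prod‖ = (g.roots.map (‖·‖)).prod from
      map_multiset_prod (normHom : K →*₀ ℝ) _]
  exact mul_lt_mul_of_pos_left hprod (norm_pos_iff.mpr (leadingCoeff_ne_zero.mpr hg0))

theorem Polynomial.abs_leadingCoeff_mul_pow_lt_abs_coeff_zero {g : ℤ[X]} (hg : 0 < g.natDegree)
    {d : ℤ} (hd : 0 < d) (hroots : ∀ z : ℂ, aeval z g = 0 → (d : ℝ) < ‖z‖) :
    |g.leadingCoeff| * d ^ g.natDegree < |g.coeff 0| := by
  have hinj : Function.Injective (algebraMap ℤ ℂ) := (algebraMap ℤ ℂ).injective_int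
  have key := (IsAlgClosed.splits (g.map (algebraMap ℤ ℂ)))
    |>.norm_leadingCoeff_mul_pow_lt_norm_coeff_zero
      (by rwa [natDegree_map_eq_of_injective hinj]) (by exact_mod_cast hd)
      fun z hz => hroots z (mem_aroots'.mp hz).2
  rw [natDegree_map_eq_of_injective hinj, leadingCoeff_map_of_injective hinj, coeff_map] at key
  simp only [algebraMap_int_eq, eq_intCast, Complex.norm_intCast] at key
  exact_mod_cast key

theorem Int.le_abs_of_dvd_of_forall_prime_dvd_le {n c : ℤ} {q : ℕ}
    (hq : ∀ q' : ℕ, q'.Prime → (q' : ℤ) ∣ n → q ≤ q') (hc : c ∣ n) (hc1 : 1 < |c|) :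
    (q : ℤ) ≤ |c| := by
  have hc1' : c.natAbs ≠ 1 := by rw [Int.abs_eq_natAbs] at hc1; omega
  have hmin : (c.natAbs.minFac : ℤ) ∣ c := Int.natCast_dvd.mpr (Nat.minFac_dvd _)
  rw [Int.abs_eq_natAbs]
  exact_mod_cast (hq _ (Nat.minFac_prime hc1') (hmin.trans hc)).trans
    (Nat.minFac_le (by rw [Int.abs_eq_natAbs] at hc1; omega))

theorem Polynomial.IsPrimitive.isUnit_of_dvd_of_natDegree_eq_zero_s7 {R : Type*} [CommSemiring R]
    {f g : R[X]} (hf : f.IsPrimitive) (hgf : g ∣ f) (hg : g.natDegree = 0) : IsUnit g := by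
  rw [eq_C_of_natDegree_eq_zero hg] at hgf ⊢
  exact isUnit_C.mpr (hf _ hgf)

theorem Polynomial.IsPrimitive.irreducible_of_forall_natDegree_pos {R : Type*} [CommSemiring R]
    [NoZeroDivisors R] {f : R[X]} (hf : f.IsPrimitive) (hdeg : 0 < f.natDegree)
    (hfactor : ∀ g h : R[X], f = g * h → 0 < g.natDegree → 0 < h.natDegree → False) :
    Irreducible f := by
  refine ⟨not_isUnit_of_natDegree_pos f hdeg, fun g k hfgk => ?_⟩
  by_contra! hunit
  refine hfactor g k hfgk (Nat.pos_of_ne_zero fun hg => hunit.1 ?_)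
    (Nat.pos_of_ne_zero fun hk => hunit.2 ?_)
  · exact hf.isUnit_of_dvd_of_natDegree_eq_zero_s7 ⟨k, hfgk⟩ hg
  · exact hf.isUnit_of_dvd_of_natDegree_eq_zero_s7 ⟨g, hfgk.trans (mul_comm g k)⟩ hk

theorem Polynomial.natDegree_sum_range_C_mul_X_pow_s7 {R : Type*} [Semiring R] {a : ℕ → R}
    {m : ℕ} (ha : a m ≠ 0) : (∑ i ∈ range (m + 1), C (a i) * X ^ i).natDegree = m := by
  refine natDegree_eq_of_le_of_coeff_ne_zero ?_ (by simpa using ha)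
  rw [natDegree_le_iff_coeff_eq_zero]
  intro k hk
  simp [show ¬k ≤ m by omega]

theorem Polynomial.mul_mul_lt_abs_coeff_zero_of_eq_mul {f g h : ℤ[X]} (hfgh : f = g * h)
    (hg : 0 < g.natDegree) (hh : 0 < h.natDegree) {p : ℕ} (hpg : (p : ℤ) ∣ g.leadingCoeff)
    {d : ℤ} (hd : 0 < d) (hroots : ∀ z : ℂ, aeval z f = 0 → (d : ℝ) < ‖z‖) {q : ℕ}
    (hqmin : ∀ q' : ℕ, q'.Prime → (q' : ℤ) ∣ f.coeff 0 → q ≤ q') :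
    (q : ℤ) * ((p : ℤ) * d) < |f.coeff 0| := by
  have hg0 : g.leadingCoeff ≠ 0 := leadingCoeff_ne_zero.mpr (ne_zero_of_natDegree_gt hg)
  have hh0 : h.leadingCoeff ≠ 0 := leadingCoeff_ne_zero.mpr (ne_zero_of_natDegree_gt hh)
  have hg_lt := abs_leadingCoeff_mul_pow_lt_abs_coeff_zero hg hd
    fun z hz => hroots z (by rw [hfgh, map_mul, hz, zero_mul])
  have hh_lt := abs_leadingCoeff_mul_pow_lt_abs_coeff_zero hh hd
    fun z hz => hroots z (by rw [hfgh, map_mul, hz, mul_zero])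
  have hd_le : ∀ n, 0 < n → d ≤ d ^ n := fun n hn => le_self_pow₀ (by omega) hn.ne'
  have hp_le : (p : ℤ) ≤ |g.leadingCoeff| :=
    Int.le_of_dvd (abs_pos.mpr hg0) ((dvd_abs _ _).mpr hpg)
  have hg_coeff : (p : ℤ) * d < |g.coeff 0| := by
    calc (p : ℤ) * d ≤ |g.leadingCoeff| * d ^ g.natDegree :=
          mul_le_mul hp_le (hd_le _ hg) hd.le (abs_nonneg _)
      _ < |g.coeff 0| := hg_lt
  have hh_coeff : d < |h.coeff 0| := by
    calc d ≤ d ^ h.natDegree := hd_le _ hh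
      _ ≤ |h.leadingCoeff| * d ^ h.natDegree :=
          le_mul_of_one_le_left (by positivity) (Int.one_le_abs hh0)
      _ < |h.coeff 0| := hh_lt
  have hf0 : f.coeff 0 = g.coeff 0 * h.coeff 0 := by rw [hfgh, mul_coeff_zero]
  have hq_le : (q : ℤ) ≤ |h.coeff 0| :=
    Int.le_abs_of_dvd_of_forall_prime_dvd_le hqmin (hf0 ▸ dvd_mul_left _ _) (by omega)
  calc (q : ℤ) * (p * d) ≤ |h.coeff 0| * (p * d) := by gcongr
    _ < |h.coeff 0| * |g.coeff 0| := mul_lt_mul_of_pos_left hg_coeff (by omega)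
    _ = |f.coeff 0| := by rw [hf0, abs_mul, mul_comm]

theorem stmt7_general (m : ℕ) (a : ℕ → ℤ) (f : ℤ[X])
    (hf : f = ∑ i ∈ range (m + 1), C (a i) * X ^ i)
    (hm : 1 ≤ m)
    (hprim : f.IsPrimitive)
    (p : ℕ) (hp : p.Prime) (d : ℤ) (hd : 0 < d)
    (ε : ℤ) (hε : ε = 1 ∨ ε = -1)
    (ham : a m = ε * (p : ℤ) * d)
    (hroots : ∀ z : ℂ, aeval z f = 0 → (d : ℝ) < ‖z‖)
    (q : ℕ) (hqdvd : (q : ℤ) ∣ a 0)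
    (hqmin : ∀ q' : ℕ, q'.Prime → (q' : ℤ) ∣ a 0 → q ≤ q')
    (hsmall : |a 0 / (q : ℤ)| ≤ |a m|) :
    Irreducible f := by
  have hp0 : (0 : ℤ) < p := by exact_mod_cast hp.pos
  have habs_am : |a m| = p * d := by
    rcases hε with rfl | rfl <;> simp [ham, abs_mul, abs_of_pos hd, abs_of_pos hp0]
  have hdeg : f.natDegree = m :=
    hf ▸ natDegree_sum_range_C_mul_X_pow_s7 (by rw [← abs_ne_zero, habs_am]; positivity)
  have hlc : f.leadingCoeff = a m := by rw [leadingCoeff, hdeg, hf]; simp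
  have hc0 : f.coeff 0 = a 0 := by simp [hf]
  have habs_a0 : |a 0| ≤ q * (p * d) := by
    rw [← Int.mul_ediv_cancel' hqdvd, abs_mul, Int.abs_natCast, ← habs_am]
    exact mul_le_mul_of_nonneg_left hsmall (Int.natCast_nonneg q)
  refine hprim.irreducible_of_forall_natDegree_pos (hdeg ▸ hm) fun g h hfgh hg hh => ?_
  have hpgh : (p : ℤ) ∣ g.leadingCoeff * h.leadingCoeff := by
    rw [← leadingCoeff_mul, ← hfgh, hlc, ham]
    exact ⟨ε * d, by ring⟩
  rw [← hc0] at hqmin habs_a0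
  rcases (Nat.prime_iff_prime_int.mp hp).dvd_mul.mp hpgh with hpg | hph
  · exact (mul_mul_lt_abs_coeff_zero_of_eq_mul hfgh hg hh hpg hd hroots hqmin).not_ge habs_a0
  · exact (mul_mul_lt_abs_coeff_zero_of_eq_mul (hfgh.trans (mul_comm g h)) hh hg hph hd hroots
      hqmin).not_ge habs_a0

/-- Case `k = 1` of Theorem 3: irreducibility criterion. -/
theorem stmt7 (m : ℕ) (a : ℕ → ℤ) (f : ℤ[X])
    (hf : f = ∑ i ∈ range (m + 1), C (a i) * X ^ i)
    (ha0 : a 0 ≠ 0) (hm : 1 ≤ m)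
    (hprim : f.IsPrimitive)
    (p : ℕ) (hp : p.Prime) (d : ℤ) (hd : 0 < d)
    (hpd : ¬ (p : ℤ) ∣ d)
    (ε : ℤ) (hε : ε = 1 ∨ ε = -1)
    (ham : a m = ε * (p : ℤ) * d)
    (hroots : ∀ z : ℂ, aeval z f = 0 → (d : ℝ) < ‖z‖)
    (q : ℕ) (hq : q.Prime) (hqdvd : (q : ℤ) ∣ a 0)
    (hqmin : ∀ q' : ℕ, q'.Prime → (q' : ℤ) ∣ a 0 → q ≤ q')
    (hsmall : |a 0 / (q : ℤ)| ≤ |a m|) :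
    Irreducible f :=
  stmt7_general m a f hf hm hprim p hp d hd ε hε ham hroots q hqdvd hqmin hsmall
end

section
/- Let f = a_0 + a_1 z + ... + a_m z^m ∈ ℤ[z] be primitive with a_0 a_m ≠ 0 and m ≥ 2, and suppose |a_{m-1}| > |a_0||a_m|^{m-1} + |a_1||a_m|^{m-2} + ... + |a_{m-2}||a_m| + 1. Then f is irreducible in ℤ[z]. -/
/-!
Let `c = a_m` and let `R(u) = (c u)^m f(1/(c u))` be the reversed polynomial of `f`, rescaled:
`R = c + a_{m-1} c u + ∑_{k ≥ 2} a_{m-k} c^k u^k`. The hypothesis says exactly that the linear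
coefficient of `R` dominates, `2 |r₀| + ∑_{k ≥ 2} |r_k| ≤ |r₁|`. Then every root of `R` in the
closed unit disc lies in the disc of radius `1/2`, where the divided difference
`(R u - R v) / (u - v)` (and in particular `R'`) stays within `∑_{k ≥ 2} |r_k| < |r₁|` of `r₁`;
so `R` has at most one root, counted with multiplicity, in the closed unit disc.
If `f = g h` with neither factor a unit, primitivity makes both factors nonconstant, and since
`|g(0)| ≥ 1` and `|lc g| ≤ |c|`, the product of the roots of the rescaled reverse of `g` has
absolute value at most `1`; so it has a root in the closed unit disc, and so does that of `h`.
These are two roots of `R`, a contradiction.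
-/

open Polynomial Finset

theorem norm_geom_sum₂_le_one {u v : ℂ} (hu : ‖u‖ ≤ 1 / 2) (hv : ‖v‖ ≤ 1 / 2) (n : ℕ) :
    ‖∑ j ∈ range n, u ^ j * v ^ (n - 1 - j)‖ ≤ 1 := by
  calc ‖∑ j ∈ range n, u ^ j * v ^ (n - 1 - j)‖
      ≤ ∑ j ∈ range n, (1 / 2 : ℝ) ^ j * (1 / 2) ^ (n - 1 - j) := by
        refine (norm_sum_le _ _).trans (sum_le_sum fun j _ => ?_)
        rw [norm_mul, norm_pow, norm_pow]
        gcongr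
    _ = n * (1 / 2 : ℝ) ^ (n - 1) := geom_sum₂_self _ n
    _ ≤ 1 := by
        rcases n with _ | n
        · simp
        · have : (n + 1 : ℝ) ≤ 2 ^ n := by exact_mod_cast Nat.lt_two_pow_self
          simp only [Nat.cast_succ, add_tsub_cancel_right, one_div, inv_pow]
          rw [← div_eq_mul_inv, div_le_one (by positivity)]
          exact this

namespace Polynomial

section DivDiff

variable {R : Type*} [CommRing R]

def divDiff (p : R[X]) (x y : R) : R :=
  p.sum fun k a => a * ∑ j ∈ range k, x ^ j * y ^ (k - 1 - j)

theorem eval_sub_eval_eq_divDiff_mul (p : R[X]) (x y : R) :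
    p.eval x - p.eval y = p.divDiff x y * (x - y) := by
  simp only [eval_eq_sum, divDiff, Polynomial.sum, ← sum_sub_distrib, sum_mul]
  exact sum_congr rfl fun k _ => by rw [mul_assoc, geom_sum₂_mul, mul_sub]

theorem divDiff_self (p : R[X]) (x : R) : p.divDiff x x = p.derivative.eval x := by
  simp only [divDiff, derivative_eval, geom_sum₂_self, mul_assoc]

end DivDiff

structure LinearCoeffDominant (R : ℂ[X]) (N : ℕ) : Prop where
  natDegree_lt : R.natDegree < N + 2
  coeff_zero_ne_zero : R.coeff 0 ≠ 0
  dominant : 2 * ‖R.coeff 0‖ + ∑ k ∈ range N, ‖R.coeff (k + 2)‖ ≤ ‖R.coeff 1‖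

namespace LinearCoeffDominant

variable {R : ℂ[X]} {N : ℕ}

theorem norm_le_half_of_isRoot (hR : LinearCoeffDominant R N) {u : ℂ} (hu : R.IsRoot u)
    (hu1 : ‖u‖ ≤ 1) : ‖u‖ ≤ 1 / 2 := by
  have hexp : R.coeff 1 * u = -(R.coeff 0 + ∑ k ∈ range N, R.coeff (k + 2) * u ^ (k + 2)) := by
    have h := hu.eq_zero
    rw [eval_eq_sum_range' hR.natDegree_lt, sum_range_succ', sum_range_succ'] at h
    linear_combination h
  have htail : ‖∑ k ∈ range N, R.coeff (k + 2) * u ^ (k + 2)‖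
      ≤ (∑ k ∈ range N, ‖R.coeff (k + 2)‖) * ‖u‖ := by
    rw [sum_mul]
    refine (norm_sum_le _ _).trans (sum_le_sum fun k _ => ?_)
    rw [norm_mul, norm_pow]
    gcongr
    exact pow_le_of_le_one (norm_nonneg u) hu1 (by omega)
  have hnorm := congrArg norm hexp
  rw [norm_mul, norm_neg] at hnorm
  have htri := norm_add_le (R.coeff 0) (∑ k ∈ range N, R.coeff (k + 2) * u ^ (k + 2))
  nlinarith [norm_nonneg u, norm_pos_iff.mpr hR.coeff_zero_ne_zero, hR.dominant]

theorem divDiff_ne_zero (hR : LinearCoeffDominant R N) {u v : ℂ} (hu : ‖u‖ ≤ 1 / 2)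
    (hv : ‖v‖ ≤ 1 / 2) : R.divDiff u v ≠ 0 := by
  have hexp : R.divDiff u v = R.coeff 1
      + ∑ k ∈ range N, R.coeff (k + 2) * ∑ j ∈ range (k + 2), u ^ j * v ^ (k + 2 - 1 - j) := by
    rw [divDiff, sum_over_range' _ (by simp) _ hR.natDegree_lt, sum_range_succ', sum_range_succ']
    simp only [range_zero, sum_empty, mul_zero, add_zero, zero_add, range_one, sum_singleton,
      tsub_self, pow_zero, mul_one]
    rw [add_comm]
  have htail : ‖∑ k ∈ range N, R.coeff (k + 2) * ∑ j ∈ range (k + 2), u ^ j * v ^ (k + 2 - 1 - j)‖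
      ≤ ∑ k ∈ range N, ‖R.coeff (k + 2)‖ := by
    refine (norm_sum_le _ _).trans (sum_le_sum fun k _ => ?_)
    rw [norm_mul]
    exact mul_le_of_le_one_right (norm_nonneg _) (norm_geom_sum₂_le_one hu hv _)
  intro h
  rw [h, eq_comm, ← eq_neg_iff_add_eq_zero] at hexp
  have hnorm := congrArg norm hexp
  rw [norm_neg] at hnorm
  linarith [norm_pos_iff.mpr hR.coeff_zero_ne_zero, hR.dominant]

theorem eq_of_isRoot_of_isRoot (hR : LinearCoeffDominant R N) {u v : ℂ} (hu : R.IsRoot u)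
    (hv : R.IsRoot v) (hu1 : ‖u‖ ≤ 1) (hv1 : ‖v‖ ≤ 1) : u = v := by
  have h := eval_sub_eval_eq_divDiff_mul R u v
  rw [hu.eq_zero, hv.eq_zero, sub_zero, eq_comm, mul_eq_zero] at h
  exact sub_eq_zero.mp (h.resolve_left (hR.divDiff_ne_zero (hR.norm_le_half_of_isRoot hu hu1)
    (hR.norm_le_half_of_isRoot hv hv1)))

theorem derivative_eval_ne_zero_of_isRoot (hR : LinearCoeffDominant R N) {u : ℂ}
    (hu : R.IsRoot u) (hu1 : ‖u‖ ≤ 1) : R.derivative.eval u ≠ 0 := by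
  have hu2 := hR.norm_le_half_of_isRoot hu hu1
  rw [← divDiff_self]
  exact hR.divDiff_ne_zero hu2 hu2

theorem false_of_mul_of_isRoot {G H : ℂ[X]} (hR : LinearCoeffDominant (G * H) N) {u v : ℂ}
    (hu : G.IsRoot u) (hv : H.IsRoot v) (hu1 : ‖u‖ ≤ 1) (hv1 : ‖v‖ ≤ 1) : False := by
  have huv : u = v :=
    hR.eq_of_isRoot_of_isRoot (root_mul_right_of_isRoot H hu) (root_mul_left_of_isRoot G hv)
      hu1 hv1
  subst huv
  apply hR.derivative_eval_ne_zero_of_isRoot (root_mul_right_of_isRoot H hu) hu1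
  simp [derivative_mul, hu.eq_zero, hv.eq_zero]

end LinearCoeffDominant

theorem exists_isRoot_norm_le_one {P : ℂ[X]} (hP : 0 < P.natDegree)
    (h : ‖P.coeff 0‖ ≤ ‖P.leadingCoeff‖) : ∃ y, P.IsRoot y ∧ ‖y‖ ≤ 1 := by
  by_contra! hbig
  have hsplit := IsAlgClosed.splits P
  have hroots : P.roots ≠ 0 := by
    rw [← Multiset.card_pos, ← hsplit.natDegree_eq_card_roots]
    exact hP
  have hprod : 1 < (P.roots.map norm).prod := by
    simpa using Multiset.prod_map_lt_prod_map hroots (fun _ => 1) norm (fun _ _ => one_pos)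
      fun y hy => hbig y (isRoot_of_mem_roots hy)
  have hcoeff : ‖P.coeff 0‖ = ‖P.leadingCoeff‖ * (P.roots.map norm).prod := by
    rw [hsplit.coeff_zero_eq_leadingCoeff_mul_prod_roots, norm_mul, norm_mul, norm_pow, norm_neg,
      norm_one, one_pow, one_mul]
    exact congrArg _ (map_multiset_prod (normHom : ℂ →*₀ ℝ) _)
  have hlc : 0 < ‖P.leadingCoeff‖ := by
    simpa using ne_zero_of_natDegree_gt hP
  nlinarith

theorem IsPrimitive.natDegree_pos_of_dvd_s9 {R : Type*} [CommSemiring R] {f g : R[X]}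
    (hf : f.IsPrimitive) (hgf : g ∣ f) (hg : ¬IsUnit g) : 0 < g.natDegree := by
  refine Nat.pos_of_ne_zero fun h => hg ?_
  rw [eq_C_of_natDegree_eq_zero h] at hgf ⊢
  exact isUnit_C.mpr (isPrimitive_iff_isUnit_of_C_dvd.mp hf _ hgf)

theorem exists_isRoot_reverse_comp_norm_le_one {g : ℤ[X]} (hg : 0 < g.natDegree)
    (hg0 : g.coeff 0 ≠ 0) {c : ℤ} (hlc : |g.leadingCoeff| ≤ |c|) :
    ∃ u : ℂ, ((g.map (Int.castRingHom ℂ)).reverse.comp (C (c : ℂ) * X)).IsRoot u ∧ ‖u‖ ≤ 1 := by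
  set G := g.map (Int.castRingHom ℂ)
  have hinj : Function.Injective (Int.castRingHom ℂ) := RingHom.injective_int _
  have hc : c ≠ 0 := by
    have := abs_pos.mpr (leadingCoeff_ne_zero.mpr (ne_zero_of_natDegree_gt hg))
    exact abs_pos.mp (this.trans_le hlc)
  have hG0 : G.coeff 0 ≠ 0 := by simpa [G, coeff_map] using hg0
  have hdeg : G.reverse.natDegree = g.natDegree := by
    rw [reverse_natDegree, natTrailingDegree_eq_zero.mpr (Or.inr hG0), Nat.sub_zero,
      natDegree_map_eq_of_injective hinj]
  have hlinear : (C (c : ℂ) * X).natDegree = 1 := natDegree_C_mul_X _ (by exact_mod_cast hc)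
  apply exists_isRoot_norm_le_one
  · rw [natDegree_comp, hdeg, hlinear, mul_one]
    exact hg
  · rw [leadingCoeff_comp (by rw [hlinear]; exact one_ne_zero), hdeg, reverse_leadingCoeff,
      trailingCoeff_eq_coeff_zero hG0, leadingCoeff_C_mul_X, comp_C_mul_X_coeff,
      coeff_zero_reverse, pow_zero, mul_one, leadingCoeff_map_of_injective hinj]
    have hint : |g.leadingCoeff| ≤ |g.coeff 0| * |c| ^ g.natDegree :=
      calc |g.leadingCoeff| ≤ |c| := hlc
        _ ≤ |c| ^ g.natDegree := le_self_pow₀ (Int.one_le_abs hc) hg.ne'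
        _ ≤ |g.coeff 0| * |c| ^ g.natDegree :=
          le_mul_of_one_le_left (by positivity) (Int.one_le_abs hg0)
    simp only [G, coeff_map, eq_intCast, norm_mul, norm_pow, Complex.norm_intCast]
    exact_mod_cast hint

theorem exists_isRoot_reverse_comp_of_dvd {f g : ℤ[X]} (hf : f.IsPrimitive) (hf0 : f.coeff 0 ≠ 0)
    (hgf : g ∣ f) (hg : ¬IsUnit g) :
    ∃ u : ℂ, ((g.map (Int.castRingHom ℂ)).reverse.comp (C (f.leadingCoeff : ℂ) * X)).IsRoot u ∧
      ‖u‖ ≤ 1 := by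
  obtain ⟨h, rfl⟩ := hgf
  rw [mul_coeff_zero] at hf0
  have hh : h ≠ 0 := by
    rintro rfl
    simp at hf0
  refine exists_isRoot_reverse_comp_norm_le_one
    (hf.natDegree_pos_of_dvd_s9 (dvd_mul_right g h) hg) (left_ne_zero_of_mul hf0) ?_
  rw [leadingCoeff_mul, abs_mul]
  exact le_mul_of_one_le_right (abs_nonneg _) (Int.one_le_abs (leadingCoeff_ne_zero.mpr hh))

theorem linearCoeffDominant_reverse_comp {f : ℤ[X]} (hf : 0 < f.natDegree)
    (hineq : ∑ i ∈ range (f.natDegree - 1), |f.coeff i| * |f.leadingCoeff| ^ (f.natDegree - 1 - i)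
      + 1 < |f.coeff (f.natDegree - 1)|) :
    LinearCoeffDominant ((f.map (Int.castRingHom ℂ)).reverse.comp (C (f.leadingCoeff : ℂ) * X))
      (f.natDegree - 1) := by
  set m := f.natDegree
  set c := f.leadingCoeff
  set R := (f.map (Int.castRingHom ℂ)).reverse.comp (C (c : ℂ) * X)
  have hinj : Function.Injective (Int.castRingHom ℂ) := RingHom.injective_int _
  have hc : c ≠ 0 := leadingCoeff_ne_zero.mpr (ne_zero_of_natDegree_gt hf)
  have hcoeff : ∀ k ≤ m, ‖R.coeff k‖ = |(f.coeff (m - k) : ℝ)| * |(c : ℝ)| ^ k := fun k hk => by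
    rw [comp_C_mul_X_coeff, coeff_reverse, natDegree_map_eq_of_injective hinj, revAt_le hk,
      coeff_map, eq_intCast, norm_mul, norm_pow, Complex.norm_intCast, Complex.norm_intCast]
  have hreflect : ∑ k ∈ range (m - 1), |f.coeff (m - (k + 2))| * |c| ^ (k + 2)
      = |c| * ∑ i ∈ range (m - 1), |f.coeff i| * |c| ^ (m - 1 - i) := by
    rw [mul_sum, ← sum_range_reflect (fun i => |c| * (|f.coeff i| * |c| ^ (m - 1 - i)))]
    refine sum_congr rfl fun k hk => ?_
    have hk' : k < m - 1 := mem_range.mp hk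
    rw [show m - (k + 2) = m - 1 - 1 - k by omega, show m - 1 - (m - 1 - 1 - k) = k + 1 by omega]
    ring
  refine ⟨?_, ?_, ?_⟩
  · calc R.natDegree ≤ (f.map (Int.castRingHom ℂ)).reverse.natDegree * (C (c : ℂ) * X).natDegree :=
          natDegree_comp_le
      _ ≤ m * 1 := by
          gcongr
          · exact (reverse_natDegree_le _).trans natDegree_map_le
          · exact (natDegree_C_mul_le _ _).trans natDegree_X_le
      _ < m - 1 + 2 := by omega
  · rw [comp_C_mul_X_coeff, coeff_zero_reverse, leadingCoeff_map_of_injective hinj]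
    simpa using ne_zero_of_natDegree_gt hf
  · have hint : 2 * |c| + ∑ k ∈ range (m - 1), |f.coeff (m - (k + 2))| * |c| ^ (k + 2)
        ≤ |f.coeff (m - 1)| * |c| := by
      rw [hreflect]
      nlinarith [abs_pos.mpr hc]
    rw [hcoeff 0 (Nat.zero_le _), hcoeff 1 hf,
      sum_congr rfl fun k hk => hcoeff (k + 2) (by have := mem_range.mp hk; omega)]
    simp only [Nat.sub_zero, pow_zero, mul_one, pow_one]
    have hcm : |(f.coeff m : ℝ)| = |(c : ℝ)| := rfl
    rw [hcm]
    exact_mod_cast hint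

theorem irreducible_of_linearCoeffDominant {f : ℤ[X]} {N : ℕ} (hprim : f.IsPrimitive)
    (hdeg : 0 < f.natDegree) (hf0 : f.coeff 0 ≠ 0)
    (hR : LinearCoeffDominant
      ((f.map (Int.castRingHom ℂ)).reverse.comp (C (f.leadingCoeff : ℂ) * X)) N) :
    Irreducible f := by
  refine ⟨fun hu => hdeg.ne' (natDegree_eq_zero_of_isUnit hu), fun g h hgh => ?_⟩
  by_contra! hgh'
  obtain ⟨u, hu, hu1⟩ := exists_isRoot_reverse_comp_of_dvd hprim hf0 (Dvd.intro h hgh.symm) hgh'.1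
  obtain ⟨v, hv, hv1⟩ :=
    exists_isRoot_reverse_comp_of_dvd hprim hf0 (Dvd.intro_left g hgh.symm) hgh'.2
  have hfac := congrArg
    (fun p => (p.map (Int.castRingHom ℂ)).reverse.comp (C (f.leadingCoeff : ℂ) * X)) hgh
  simp only [Polynomial.map_mul, reverse_mul_of_domain, mul_comp] at hfac
  rw [hfac] at hR
  exact hR.false_of_mul_of_isRoot hu hv hu1 hv1

end Polynomial

/-- The non-monic Perron criterion, as the case `j = m - 1`, `b = 1`, `δ = 1` of Theorem 4. -/
theorem stmt9 (m : ℕ) (hm : 2 ≤ m) (a : ℕ → ℤ) (f : ℤ[X])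
    (hf : f = ∑ i ∈ range (m + 1), C (a i) * X ^ i)
    (ha : a 0 * a m ≠ 0) (hprim : f.IsPrimitive)
    (hineq : |a (m - 1)| > (∑ i ∈ range (m - 1), |a i| * |a m| ^ (m - 1 - i)) + 1) :
    Irreducible f := by
  have hfa : ∀ i ≤ m, f.coeff i = a i := fun i hi => by
    simp [hf, Nat.lt_succ_of_le hi]
  have hdeg : f.natDegree = m := by
    refine natDegree_eq_of_le_of_coeff_ne_zero ?_
      (by rw [hfa m le_rfl]; exact right_ne_zero_of_mul ha)
    rw [hf]
    exact natDegree_sum_le_of_forall_le _ _ fun i hi =>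
      (natDegree_C_mul_X_pow_le _ _).trans (Nat.lt_succ_iff.mp (mem_range.mp hi))
  have hlc : f.leadingCoeff = a m := by rw [leadingCoeff, hdeg, hfa m le_rfl]
  have hf0 : f.coeff 0 ≠ 0 := by rw [hfa 0 (Nat.zero_le _)]; exact left_ne_zero_of_mul ha
  refine irreducible_of_linearCoeffDominant hprim (by omega) hf0
    (linearCoeffDominant_reverse_comp (by omega) ?_)
  rw [hdeg, hlc, hfa (m - 1) (by omega)]
  convert hineq using 2
  exact sum_congr rfl fun i hi => by rw [hfa i (by have := mem_range.mp hi; omega)]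
end

section
/- For a prime p and integers m ≥ n ≥ 2, the polynomial P(z) = p^{m-1}(1 + z + z^2 + ... + z^{n-1}) ± z^m is irreducible in ℤ[z]. -/
/-!
Substituting `X ↦ p X` turns `P = p^(m-1) (1 + X + ⋯ + X^(n-1)) + ε X^m` into `p^(m-1) G` with
`G = ∑_{i<n} p^i X^i + ε p X^m`. The reverse `X^m G(1/X)` is monic with all lower coefficients
divisible by `p` and constant term `ε p`, so it is Eisenstein at `p`. Hence `G` is irreducible
(its constant term is `1`), so is `P(p X)` over `ℚ`, hence `P` over `ℚ`, and `P` is primitive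
because its leading coefficient is `±1`; Gauss's lemma concludes.
-/

open Polynomial Finset

namespace Polynomial

section Reverse

variable {R : Type*} [CommRing R] [IsDomain R] {f : R[X]}

theorem isUnit_of_isUnit_reverse (h0 : f.coeff 0 ≠ 0) (hf : IsUnit f.reverse) : IsUnit f := by
  have hdeg : f.natDegree = 0 := by
    have := natDegree_eq_zero_of_isUnit hf
    rwa [reverse_natDegree, natTrailingDegree_eq_zero.mpr (Or.inr h0), Nat.sub_zero] at this
  rw [eq_C_of_natDegree_eq_zero hdeg] at hf ⊢
  rwa [reverse_C] at hf

theorem irreducible_of_irreducible_reverse (h0 : f.coeff 0 ≠ 0) (hf : Irreducible f.reverse) :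
    Irreducible f where
  not_isUnit hu := hf.not_isUnit <| by
    have hC := eq_C_of_natDegree_eq_zero (natDegree_eq_zero_of_isUnit hu)
    rw [hC] at hu ⊢
    rwa [reverse_C]
  isUnit_or_isUnit a b hab := by
    rw [hab, mul_coeff_zero] at h0
    rw [hab, reverse_mul_of_domain] at hf
    exact (hf.isUnit_or_isUnit rfl).imp (isUnit_of_isUnit_reverse (left_ne_zero_of_mul h0))
      (isUnit_of_isUnit_reverse (right_ne_zero_of_mul h0))

end Reverse

theorem isPrimitive_of_isUnit_coeff {R : Type*} [CommSemiring R] {f : R[X]} {k : ℕ}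
    (h : IsUnit (f.coeff k)) : f.IsPrimitive :=
  fun r hr ↦ isUnit_of_dvd_unit ((C_dvd_iff_dvd_coeff r f).mp hr k) h

theorem irreducible_comp_C_mul_X_iff {K : Type*} [Field K] {a : K} (ha : a ≠ 0) {f : K[X]} :
    Irreducible (f.comp (C a * X)) ↔ Irreducible f := by
  let := invertibleOfNonzero ha
  simpa [comp_eq_aeval] using
    MulEquiv.irreducible_iff (f := (algEquivCMulXAddC a 0).toMulEquiv) (x := f)

end Polynomial

section ScaledGeomSum

variable {R : Type*} [CommRing R] (p ε : R) (n m : ℕ)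

noncomputable def scaledGeomSumAdd : R[X] :=
  ∑ i ∈ range n, C (p ^ i) * X ^ i + C (ε * p) * X ^ m

theorem coeff_scaledGeomSumAdd (k : ℕ) : (scaledGeomSumAdd p ε n m).coeff k =
    (if k < n then p ^ k else 0) + (if k = m then ε * p else 0) := by
  simp only [scaledGeomSumAdd, coeff_add, finsetSum_coeff, coeff_C_mul_X_pow, sum_ite_eq,
    mem_range]

variable {p ε n m}

theorem coeff_zero_scaledGeomSumAdd (hn : 0 < n) (hnm : n ≤ m) :
    (scaledGeomSumAdd p ε n m).coeff 0 = 1 := by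
  rw [coeff_scaledGeomSumAdd, if_pos hn, if_neg (by omega), pow_zero, add_zero]

theorem natDegree_scaledGeomSumAdd (hnm : n ≤ m) (hεp : ε * p ≠ 0) :
    (scaledGeomSumAdd p ε n m).natDegree = m := by
  refine le_antisymm (natDegree_le_iff_coeff_eq_zero.mpr fun k hk ↦ ?_)
    (le_natDegree_of_ne_zero ?_)
  · rw [coeff_scaledGeomSumAdd, if_neg (by omega), if_neg (by omega), add_zero]
  · rwa [coeff_scaledGeomSumAdd, if_neg (by omega), if_pos rfl, zero_add]

theorem irreducible_reverse_scaledGeomSumAdd [IsDomain R] (hp : Prime p) (hε : IsUnit ε)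
    (hn : 0 < n) (hnm : n ≤ m) : Irreducible (scaledGeomSumAdd p ε n m).reverse := by
  set G := scaledGeomSumAdd p ε n m
  have hdeg : G.natDegree = m :=
    natDegree_scaledGeomSumAdd hnm (mul_ne_zero hε.ne_zero hp.ne_zero)
  have hG0 : G.coeff 0 = 1 := coeff_zero_scaledGeomSumAdd hn hnm
  have hcoeff (k : ℕ) (hk : k ≤ m) : G.reverse.coeff k = G.coeff (m - k) := by
    rw [coeff_reverse, hdeg, revAt_le hk]
  have hmonic : G.reverse.Monic := by
    rw [Monic, reverse_leadingCoeff, trailingCoeff_eq_coeff_zero (by simp [hG0]), hG0]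
  have hdegree : G.reverse.degree = m := by
    rw [degree_eq_natDegree hmonic.ne_zero, reverse_natDegree, hdeg,
      natTrailingDegree_eq_zero.mpr (Or.inr (by simp [hG0])), Nat.sub_zero]
  refine irreducible_of_eisenstein_criterion ((Ideal.span_singleton_prime hp.ne_zero).mpr hp)
    ?_ ?_ (by rw [hdegree]; exact_mod_cast hn.trans_le hnm) ?_ hmonic.isPrimitive
  · rw [hmonic.leadingCoeff, Ideal.mem_span_singleton]
    exact hp.not_dvd_one
  · intro k hk
    rw [hdegree, Nat.cast_lt] at hk
    rw [hcoeff k hk.le, coeff_scaledGeomSumAdd, Ideal.mem_span_singleton]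
    refine dvd_add ?_ ?_ <;> split_ifs
    exacts [dvd_pow_self _ (by omega), dvd_zero _, dvd_mul_left _ _, dvd_zero _]
  · rw [hcoeff 0 m.zero_le, Nat.sub_zero, coeff_scaledGeomSumAdd, if_neg (by omega), if_pos rfl,
      zero_add, Ideal.span_singleton_pow, Ideal.mem_span_singleton, sq,
      mul_dvd_mul_iff_right hp.ne_zero]
    exact fun h ↦ hp.not_isUnit (isUnit_of_dvd_unit h hε)

theorem irreducible_scaledGeomSumAdd [IsDomain R] (hp : Prime p) (hε : IsUnit ε)
    (hn : 0 < n) (hnm : n ≤ m) : Irreducible (scaledGeomSumAdd p ε n m) :=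
  irreducible_of_irreducible_reverse (by simp [coeff_zero_scaledGeomSumAdd hn hnm])
    (irreducible_reverse_scaledGeomSumAdd hp hε hn hnm)

theorem geomSum_add_comp_C_mul_X (hm : 0 < m) :
    (C (p ^ (m - 1)) * (∑ i ∈ range n, X ^ i) + C ε * X ^ m).comp (C p * X) =
      C (p ^ (m - 1)) * scaledGeomSumAdd p ε n m := by
  obtain ⟨m, rfl⟩ := Nat.exists_eq_add_of_lt hm
  simp [scaledGeomSumAdd, add_comp, mul_comp, mul_pow, mul_add, Finset.mul_sum, pow_succ]
  ring

end ScaledGeomSum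

/-- Example 1: `p^(m-1) (1 + z + ⋯ + z^(n-1)) ± z^m` is irreducible. -/
theorem stmt13 (p : ℕ) (hp : p.Prime) (m n : ℕ) (hn : 2 ≤ n) (hmn : n ≤ m)
    (ε : ℤ) (hε : ε = 1 ∨ ε = -1) :
    Irreducible (C ((p : ℤ) ^ (m - 1)) * (∑ i ∈ range n, X ^ i) + C ε * X ^ m) := by
  have hεu : IsUnit ε := Int.isUnit_iff.mpr hε
  have hp0 : (p : ℚ) ≠ 0 := by exact_mod_cast hp.ne_zero
  have hG := irreducible_scaledGeomSumAdd (Nat.prime_iff_prime_int.mp hp) hεu (by omega) hmn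
  have hGprim : (scaledGeomSumAdd (p : ℤ) ε n m).IsPrimitive :=
    isPrimitive_of_isUnit_coeff (k := 0) (by simp [coeff_zero_scaledGeomSumAdd (by omega) hmn])
  have hPprim : (C ((p : ℤ) ^ (m - 1)) * (∑ i ∈ range n, X ^ i) + C ε * X ^ m).IsPrimitive :=
    isPrimitive_of_isUnit_coeff (k := m) (by
      simpa only [coeff_add, coeff_C_mul, finsetSum_coeff, coeff_X_pow, sum_ite_eq, mem_range,
        if_neg (show ¬ m < n by omega), if_true, mul_zero, mul_one, zero_add])
  rw [IsPrimitive.Int.irreducible_iff_irreducible_map_cast hPprim,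
    ← irreducible_comp_C_mul_X_iff hp0]
  have hscale : (C (p : ℚ) * X) = (C (p : ℤ) * X).map (Int.castRingHom ℚ) := by simp
  rw [hscale, ← map_comp, geomSum_add_comp_C_mul_X (by omega), Polynomial.map_mul, map_C,
    irreducible_isUnit_mul (isUnit_C.mpr (by simp [hp.ne_zero]))]
  exact (IsPrimitive.Int.irreducible_iff_irreducible_map_cast hGprim).mp hG
end

section
/- Let p be a prime and k, d, m positive integers with m ≥ 2 and p not dividing d, and let P(z) = ± p^k d + a_1 z + ... + a_m z^m ∈ ℤ[z] with p^k > m · max{|a_1|, |a_2| d, ..., |a_m| d^{m-1}}. Then every complex zero of P satisfies |z| > d. -/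
open Polynomial Finset

/-! If `|z| ≤ d`, the triangle inequality bounds `|a₁ z + ⋯ + a_m z^m|` by `∑ |a_i| d^i`, and each
of the `m` terms is less than `p^k d / m` by hypothesis, so the constant term `±p^k d` strictly
dominates and `P(z)` cannot vanish. -/

theorem add_sum_mul_pow_ne_zero_of_sum_norm_lt {R : Type*} [SeminormedRing R] [NormOneClass R]
    {s : Finset ℕ} {a : ℕ → R} {c z : R} {r : ℝ} (hz : ‖z‖ ≤ r)
    (hdom : ∑ i ∈ s, ‖a i‖ * r ^ i < ‖c‖) :
    c + ∑ i ∈ s, a i * z ^ i ≠ 0 := by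
  intro h
  have hc : ‖c‖ = ‖∑ i ∈ s, a i * z ^ i‖ := by
    rw [eq_neg_of_add_eq_zero_left h, norm_neg]
  have hsum : ‖∑ i ∈ s, a i * z ^ i‖ ≤ ∑ i ∈ s, ‖a i‖ * r ^ i := by
    refine (norm_sum_le _ _).trans (sum_le_sum fun i _ => ?_)
    calc ‖a i * z ^ i‖ ≤ ‖a i‖ * ‖z‖ ^ i :=
          (norm_mul_le _ _).trans (by gcongr; exact norm_pow_le z i)
      _ ≤ ‖a i‖ * r ^ i := by gcongr
  linarith

theorem sum_Icc_mul_pow_lt {R : Type*} [CommRing R] [LinearOrder R] [IsStrictOrderedRing R]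
    {m : ℕ} (hm : 1 ≤ m) {b : ℕ → R} {d M : R} (hd : 0 < d)
    (h : ∀ i ∈ Icc 1 m, m * (b i * d ^ (i - 1)) < M) :
    ∑ i ∈ Icc 1 m, b i * d ^ i < M * d := by
  have hmul : (m : R) * ∑ i ∈ Icc 1 m, b i * d ^ i < m * (M * d) :=
    calc (m : R) * ∑ i ∈ Icc 1 m, b i * d ^ i
        = ∑ i ∈ Icc 1 m, m * (b i * d ^ (i - 1)) * d := by
          rw [mul_sum]
          refine sum_congr rfl fun i hi => ?_
          rw [← pow_sub_one_mul (by grind) d]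
          ring
      _ < ∑ _i ∈ Icc 1 m, M * d :=
          sum_lt_sum_of_nonempty ⟨1, by simpa using hm⟩ fun i hi => by gcongr; exact h i hi
      _ = m * (M * d) := by simp
  exact lt_of_mul_lt_mul_left hmul (Nat.cast_nonneg m)

theorem stmt14_general (p : ℕ) (k : ℕ) (d : ℤ) (hd : 0 < d)
    (m : ℕ) (hm : 2 ≤ m)
    (a : ℕ → ℤ)
    (ε : ℤ) (hε : ε = 1 ∨ ε = -1)
    (P : ℤ[X])
    (hP : P = C (ε * (p : ℤ) ^ k * d) + ∑ i ∈ Icc 1 m, C (a i) * X ^ i)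
    (hbig : ∀ i, 1 ≤ i → i ≤ m → (p : ℤ) ^ k > (m : ℤ) * (|a i| * d ^ (i - 1))) :
    ∀ z : ℂ, aeval z P = 0 → (d : ℝ) < ‖z‖ := by
  intro z hz
  by_contra! hzd
  have hconst : |ε * (p : ℤ) ^ k * d| = (p : ℤ) ^ k * d := by
    rcases hε with rfl | rfl <;> simp [abs_of_pos hd]
  have hdom : ∑ i ∈ Icc 1 m, |a i| * d ^ i < |ε * (p : ℤ) ^ k * d| :=
    hconst ▸ sum_Icc_mul_pow_lt (by omega) hd fun i hi => by
      simp only [mem_Icc] at hi; exact hbig i hi.1 hi.2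
  refine add_sum_mul_pow_ne_zero_of_sum_norm_lt (s := Icc 1 m) (a := fun i => (a i : ℂ))
    (c := ((ε * (p : ℤ) ^ k * d : ℤ) : ℂ)) hzd ?_ ?_
  · simp only [Complex.norm_intCast]
    exact_mod_cast hdom
  · simpa [hP] using hz

/-- Example 2 (zero location): all zeros of `±p^k d + a₁ z + ⋯ + a_m z^m` lie
outside the closed disk `|z| ≤ d`. -/
theorem stmt14 (p : ℕ) (hp : p.Prime) (k : ℕ) (hk : 1 ≤ k) (d : ℤ) (hd : 0 < d)
    (hpd : ¬ (p : ℤ) ∣ d) (m : ℕ) (hm : 2 ≤ m)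
    (a : ℕ → ℤ) (ham : a m ≠ 0)
    (ε : ℤ) (hε : ε = 1 ∨ ε = -1)
    (P : ℤ[X])
    (hP : P = C (ε * (p : ℤ) ^ k * d) + ∑ i ∈ Icc 1 m, C (a i) * X ^ i)
    (hbig : ∀ i, 1 ≤ i → i ≤ m → (p : ℤ) ^ k > (m : ℤ) * (|a i| * d ^ (i - 1))) :
    ∀ z : ℂ, aeval z P = 0 → (d : ℝ) < ‖z‖ :=
  stmt14_general p k d hd m hm a ε hε P hP hbig
end

section
/- Let p be a prime and d a positive integer with p not dividing d, m ≥ 2, and let P(z) = ± p d + a_1 z + ... + a_m z^m ∈ ℤ[z] be primitive with p > m · max{|a_1|, |a_2| d, ..., |a_m| d^{m-1}}. Then P is irreducible in ℤ[z]. -/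
/-!
On the closed disc `‖z‖ ≤ d` the constant term `± p d` strictly dominates
`∑ |aᵢ| ‖z‖ⁱ`, so every complex root of `P` has modulus `> d`. In a factorization
`P = f g`, the prime `p` divides the constant term of exactly one factor (as `p² ∤ p d`);
the constant term of the other factor `h` then divides `d`. If `h` were nonconstant,
`|h(0)| = |lc h| ∏ |roots of h| > d`, since its roots are roots of `P`. So `h` is a
constant, which is a unit because `P` is primitive.
-/

open Polynomial Finset

theorem norm_le_sum_norm_mul_pow_of_add_sum_eq_zero {𝕜 : Type*} [NormedDivisionRing 𝕜]
    {c z : 𝕜} {a : ℕ → 𝕜} {s : Finset ℕ} {r : ℝ} (hz : c + ∑ i ∈ s, a i * z ^ i = 0)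
    (hzr : ‖z‖ ≤ r) : ‖c‖ ≤ ∑ i ∈ s, ‖a i‖ * r ^ i := by
  rw [eq_neg_of_add_eq_zero_left hz, norm_neg]
  refine (norm_sum_le _ _).trans (sum_le_sum fun i _ => ?_)
  rw [norm_mul, norm_pow]
  gcongr

theorem sum_abs_mul_pow_lt_of_forall_card_mul_lt {R : Type*} [CommRing R] [LinearOrder R]
    [IsStrictOrderedRing R] {p d : R} {a : ℕ → R} {m : ℕ} (hd : 0 < d) (hm : 0 < m)
    (h : ∀ i ∈ Icc 1 m, m * (|a i| * d ^ (i - 1)) < p) :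
    ∑ i ∈ Icc 1 m, |a i| * d ^ i < p * d := by
  have hm' : (0 : R) < m := by exact_mod_cast hm
  refine lt_of_mul_lt_mul_left ?_ hm'.le
  calc (m : R) * ∑ i ∈ Icc 1 m, |a i| * d ^ i
      = ∑ i ∈ Icc 1 m, m * (|a i| * d ^ (i - 1)) * d := by
        rw [mul_sum]
        refine sum_congr rfl fun i hi => ?_
        rw [← pow_sub_one_mul (by have := (mem_Icc.1 hi).1; omega)]
        ring
    _ < ∑ _i ∈ Icc 1 m, p * d :=
        sum_lt_sum_of_nonempty ⟨1, by simp; omega⟩ fun i hi => by gcongr; exact h i hi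
    _ = m * (p * d) := by simp

theorem lt_norm_coeff_zero_of_lt_norm_roots {f : ℂ[X]} (hlead : 1 ≤ ‖f.leadingCoeff‖)
    (hdeg : 0 < f.natDegree) {r : ℝ} (hr : 1 ≤ r) (hroots : ∀ z ∈ f.roots, r < ‖z‖) :
    r < ‖f.coeff 0‖ := by
  have hf : f ≠ 0 := by rintro rfl; simp at hdeg
  obtain ⟨z₀, hz₀⟩ := Complex.exists_root (natDegree_pos_iff_degree_pos.1 hdeg)
  have hz₀ : z₀ ∈ f.roots := (mem_roots hf).2 hz₀
  have hnorm : ‖f.coeff 0‖ = ‖f.leadingCoeff‖ * (f.roots.map fun z => max 1 ‖z‖).prod := by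
    have hprod : ‖f.roots.prod‖ = (f.roots.map (‖·‖)).prod :=
      map_multiset_prod (normHom : ℂ →*₀ ℝ) _
    rw [(IsAlgClosed.splits f).coeff_zero_eq_leadingCoeff_mul_prod_roots, norm_mul, norm_mul,
      norm_pow, norm_neg, norm_one, one_pow, one_mul, hprod,
      Multiset.map_congr rfl fun z hz => max_eq_right (hr.trans (hroots z hz).le)]
  calc r < max 1 ‖z₀‖ := lt_max_of_lt_right (hroots z₀ hz₀)
    _ ≤ (f.roots.map fun z => max 1 ‖z‖).prod :=
        Multiset.mem_le_prod_of_one_le (fun _ => le_max_left _ _) hz₀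
    _ ≤ ‖f.coeff 0‖ := by
        rw [hnorm]
        exact le_mul_of_one_le_left (zero_le_one.trans (Multiset.one_le_prod fun x hx => by
          obtain ⟨_, _, rfl⟩ := Multiset.mem_map.1 hx; exact le_max_left _ _)) hlead

theorem lt_abs_coeff_zero_of_lt_norm_aeval_eq_zero {g : ℤ[X]} (hdeg : 0 < g.natDegree)
    {r : ℝ} (hr : 1 ≤ r) (hroots : ∀ z : ℂ, aeval z g = 0 → r < ‖z‖) :
    r < |g.coeff 0| := by
  have hinj : Function.Injective (Int.castRingHom ℂ) := Int.cast_injective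
  have hg : g ≠ 0 := by rintro rfl; simp at hdeg
  simpa using lt_norm_coeff_zero_of_lt_norm_roots (f := g.map (Int.castRingHom ℂ))
    (by
      rw [leadingCoeff_map_of_injective hinj, eq_intCast, Complex.norm_intCast]
      exact_mod_cast Int.one_le_abs (leadingCoeff_ne_zero.2 hg))
    (by rwa [natDegree_map_eq_of_injective hinj]) hr
    (fun z hz => hroots z (by rwa [mem_roots_map_of_injective hinj hg] at hz))

section PrimeTimesConstantTerm

variable {P : ℤ[X]} {p d : ℤ}

theorem isUnit_of_eq_mul_of_not_dvd_coeff_zero (hprim : P.IsPrimitive) (hp : Prime p)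
    (hpd : ¬ p ∣ d) (hP0 : P.coeff 0 = p * d)
    (hroots : ∀ z : ℂ, aeval z P = 0 → |(d : ℝ)| < ‖z‖) {f g : ℤ[X]} (hfg : P = f * g)
    (hpg : ¬ p ∣ g.coeff 0) : IsUnit g := by
  have h0 : f.coeff 0 * g.coeff 0 = p * d := by rw [← hP0, hfg, mul_coeff_zero]
  obtain ⟨c, hc⟩ := (hp.dvd_mul.1 ⟨d, h0⟩).resolve_right hpg
  have hgd : g.coeff 0 ∣ d :=
    ⟨c, mul_left_cancel₀ hp.ne_zero (by rw [← h0, hc]; ring)⟩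
  have hd : d ≠ 0 := by rintro rfl; exact hpd (dvd_zero p)
  have hdeg : g.natDegree = 0 := by
    by_contra hdeg
    refine (Int.le_of_dvd (abs_pos.2 hd) ((abs_dvd_abs _ _).2 hgd)).not_gt ?_
    have hd1 : (1 : ℝ) ≤ |(d : ℝ)| := by exact_mod_cast Int.one_le_abs hd
    exact_mod_cast lt_abs_coeff_zero_of_lt_norm_aeval_eq_zero (Nat.pos_of_ne_zero hdeg) hd1
      (fun z hz => by simpa using hroots z (by rw [hfg, map_mul, hz, mul_zero]))
  rw [eq_C_of_natDegree_eq_zero hdeg] at hfg ⊢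
  exact (hprim _ ⟨f, by rw [hfg, mul_comm]⟩).map C

theorem irreducible_of_coeff_zero_eq_prime_mul (hprim : P.IsPrimitive) (hp : Prime p)
    (hpd : ¬ p ∣ d) (hP0 : P.coeff 0 = p * d)
    (hroots : ∀ z : ℂ, aeval z P = 0 → |(d : ℝ)| < ‖z‖) : Irreducible P := by
  refine ⟨fun hu => hp.not_isUnit (isUnit_of_mul_isUnit_left (y := d) ?_), fun f g hfg => ?_⟩
  · rw [← hP0, ← constantCoeff_apply]
    exact hu.map _
  by_cases hpg : p ∣ g.coeff 0
  · -- `p` cannot divide both constant terms, since `p ^ 2 ∤ p * d`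
    refine .inl (isUnit_of_eq_mul_of_not_dvd_coeff_zero hprim hp hpd hP0 hroots
      (hfg.trans (mul_comm f g)) fun hpf => hpd ?_)
    obtain ⟨x, hx⟩ := hpf
    obtain ⟨y, hy⟩ := hpg
    refine ⟨x * y, mul_left_cancel₀ hp.ne_zero ?_⟩
    rw [← hP0, hfg, mul_coeff_zero, hx, hy]
    ring
  · exact .inr (isUnit_of_eq_mul_of_not_dvd_coeff_zero hprim hp hpd hP0 hroots hfg hpg)

end PrimeTimesConstantTerm

theorem stmt15_general (p : ℕ) (hp : p.Prime) (d : ℤ) (hd : 0 < d)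
    (hpd : ¬ (p : ℤ) ∣ d) (m : ℕ) (hm : 2 ≤ m)
    (a : ℕ → ℤ)
    (ε : ℤ) (hε : ε = 1 ∨ ε = -1)
    (P : ℤ[X])
    (hP : P = C (ε * (p : ℤ) * d) + ∑ i ∈ Icc 1 m, C (a i) * X ^ i)
    (hprim : P.IsPrimitive)
    (hbig : ∀ i, 1 ≤ i → i ≤ m → (p : ℤ) > (m : ℤ) * (|a i| * d ^ (i - 1))) :
    Irreducible P := by
  have hsum : ∑ i ∈ Icc 1 m, |a i| * d ^ i < p * d :=
    sum_abs_mul_pow_lt_of_forall_card_mul_lt hd (by omega) fun i hi =>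
      hbig i (mem_Icc.1 hi).1 (mem_Icc.1 hi).2
  refine irreducible_of_coeff_zero_eq_prime_mul hprim (Nat.prime_iff_prime_int.1 hp)
    (d := ε * d) ?_ (by simp [hP]; ring) fun z hz => ?_
  · rwa [(Int.isUnit_iff.2 hε).dvd_mul_left]
  have hεR : |(ε : ℝ)| = 1 := by rcases hε with rfl | rfl <;> simp
  have hdR : |(d : ℝ)| = d := abs_of_pos (by exact_mod_cast hd)
  by_contra! hzd
  rw [Int.cast_mul, abs_mul, hεR, hdR, one_mul] at hzd
  have hle := norm_le_sum_norm_mul_pow_of_add_sum_eq_zero (by simpa [hP] using hz) hzd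
  simp only [norm_mul, Complex.norm_intCast, Complex.norm_natCast, hεR, hdR, one_mul] at hle
  exact hle.not_gt (by exact_mod_cast hsum)

/-- Example 2 (irreducibility, case `k = 1`). -/
theorem stmt15 (p : ℕ) (hp : p.Prime) (d : ℤ) (hd : 0 < d)
    (hpd : ¬ (p : ℤ) ∣ d) (m : ℕ) (hm : 2 ≤ m)
    (a : ℕ → ℤ) (ham : a m ≠ 0)
    (ε : ℤ) (hε : ε = 1 ∨ ε = -1)
    (P : ℤ[X])
    (hP : P = C (ε * (p : ℤ) * d) + ∑ i ∈ Icc 1 m, C (a i) * X ^ i)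
    (hprim : P.IsPrimitive)
    (hbig : ∀ i, 1 ≤ i → i ≤ m → (p : ℤ) > (m : ℤ) * (|a i| * d ^ (i - 1))) :
    Irreducible P :=
  stmt15_general p hp d hd hpd m hm a ε hε P hP hprim hbig
end
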